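/- arXiv:0812.4847 — 9 statements merged into one kernel-verified Lean document; each statement's English description precedes it below -/
import Mathlib

section
/- For every 1-Lipschitz function f : ℤ₊ → ℝ and every n ∈ ℤ₊, the Stein solution satisfies |g_f(n)| ≤ (1/α) ∑_{k=1}^∞ k π_k, and this bound is attained: for the function f₁(k) = −k one has g_{f₁}(1) = (1/α) ∑_{k=1}^∞ k π_k; consequently the supremum over all 1-Lipschitz f of sup_n |g_f(n)| equals (1/α) ∑_{k=1}^∞ k π_k. -/
/-! Multiplying the Stein equation by `π n` and using `(n + 1)(β + n) π (n + 1) = α π n`, it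
telescopes to `α π n g (n + 1) = ∑_{k ≤ n} π k (f k - π f)`. Writing
`f k - π f = ∑_j π j (f k - f j)`, the block `j ≤ n` cancels by antisymmetry, leaving
`∑_{k ≤ n < j} π k π j (f k - f j)`; for `f` 1-Lipschitz this is bounded in absolute value by
the same sum for `f₁ = -id`, which is `∑_{k ≤ n} π k (m - k)` with `m = ∑ k π k`. Finally
`∑_{k ≤ n} π k (m - k) ≤ m π n`, with equality at `n = 0`, which is where `g_{f₁}(1) = m / α`
comes from. -/

open Finset

theorem Finset.sum_sum_mul_mul_sub_eq_zero {ι R : Type*} [CommRing R] (s : Finset ι)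
    (w c : ι → R) : ∑ k ∈ s, ∑ j ∈ s, w k * w j * (c k - c j) = 0 := by
  simp_rw [mul_sub, Finset.sum_sub_distrib]
  rw [sub_eq_zero, Finset.sum_comm]
  exact Finset.sum_congr rfl fun j _ => Finset.sum_congr rfl fun k _ => by ring

theorem sum_range_nonneg_of_tsum_eq_zero {s : ℕ → ℝ} (hs : Summable s) (hs0 : ∑' i, s i = 0)
    (hsign : ∀ i j, i ≤ j → s i < 0 → s j ≤ 0) (n : ℕ) : 0 ≤ ∑ i ∈ range n, s i := by
  by_cases hneg : ∃ i < n, s i < 0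
  · obtain ⟨i₀, hi₀n, hi₀⟩ := hneg
    have htail : ∑' i, s (i + n) ≤ 0 :=
      tsum_nonpos fun i => hsign i₀ (i + n) (by omega) hi₀
    linarith [hs.sum_add_tsum_nat_add n]
  · push Not at hneg
    exact Finset.sum_nonneg fun i hi => hneg i (Finset.mem_range.mp hi)

noncomputable def centredPartialSum (π f : ℕ → ℝ) (N : ℕ) : ℝ :=
  ∑ k ∈ range N, π k * (f k - ∑' j, f j * π j)

section centredPartialSum

variable {π f : ℕ → ℝ}

theorem centredPartialSum_eq_sum_tail (hπ : Summable π) (hπ1 : ∑' j, π j = 1)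
    (hfπ : Summable fun j => f j * π j) (N : ℕ) :
    centredPartialSum π f N = ∑ k ∈ range N, π k * ∑' i, (f k - f (i + N)) * π (i + N) := by
  have hsplit : ∀ k, f k - ∑' j, f j * π j
      = ∑ j ∈ range N, (f k - f j) * π j + ∑' i, (f k - f (i + N)) * π (i + N) := by
    intro k
    have hdiff : Summable fun j => f k * π j - f j * π j := (hπ.mul_left (f k)).sub hfπ
    rw [Summable.sum_add_tsum_nat_add N (by simpa only [sub_mul] using hdiff)]
    simp_rw [sub_mul]
    rw [(hπ.mul_left (f k)).tsum_sub hfπ, tsum_mul_left, hπ1, mul_one]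
  have hdiag : ∑ k ∈ range N, ∑ j ∈ range N, π k * ((f k - f j) * π j) = 0 := by
    rw [← Finset.sum_sum_mul_mul_sub_eq_zero (range N) π f]
    exact Finset.sum_congr rfl fun k _ => Finset.sum_congr rfl fun j _ => by ring
  simp_rw [centredPartialSum, hsplit, mul_add, Finset.sum_add_distrib, Finset.mul_sum, hdiag,
    zero_add]

theorem abs_centredPartialSum_le (hπ0 : ∀ n, 0 ≤ π n) (hπ : Summable π) (hπ1 : ∑' j, π j = 1)
    (hmean : Summable fun k : ℕ => (k : ℝ) * π k)
    (hf : ∀ x y : ℕ, |f x - f y| ≤ |(x : ℝ) - (y : ℝ)|) (hfπ : Summable fun j => f j * π j)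
    (N : ℕ) : |centredPartialSum π f N| ≤ centredPartialSum π (fun k => -(k : ℝ)) N := by
  have hidπ : Summable fun j : ℕ => -(j : ℝ) * π j := by simpa only [neg_mul] using hmean.neg
  rw [centredPartialSum_eq_sum_tail hπ hπ1 hfπ, centredPartialSum_eq_sum_tail hπ hπ1 hidπ]
  refine (Finset.abs_sum_le_sum_abs _ _).trans (Finset.sum_le_sum fun k hk => ?_)
  rw [abs_mul, abs_of_nonneg (hπ0 k)]
  refine mul_le_mul_of_nonneg_left ?_ (hπ0 k)
  have hpt : ∀ i, |(f k - f (i + N)) * π (i + N)|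
      ≤ (-(k : ℝ) - -((i + N : ℕ) : ℝ)) * π (i + N) := by
    intro i
    have hkN : (k : ℝ) ≤ ((i + N : ℕ) : ℝ) := by
      exact_mod_cast (Finset.mem_range.mp hk).le.trans (Nat.le_add_left N i)
    rw [abs_mul, abs_of_nonneg (hπ0 _)]
    refine mul_le_mul_of_nonneg_right ((hf k (i + N)).trans ?_) (hπ0 _)
    rw [abs_of_nonpos (by linarith)]
    linarith
  have hdom : Summable fun i => (-(k : ℝ) - -((i + N : ℕ) : ℝ)) * π (i + N) := by
    refine (summable_nat_add_iff N (f := fun j : ℕ => (-(k : ℝ) - -(j : ℝ)) * π j)).mpr ?_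
    simpa only [sub_mul, neg_mul, sub_neg_eq_add, neg_add_eq_sub] using
      hmean.sub (hπ.mul_left (k : ℝ))
  have habs : Summable fun i => |(f k - f (i + N)) * π (i + N)| :=
    hdom.of_nonneg_of_le (fun i => abs_nonneg _) hpt
  calc |∑' i, (f k - f (i + N)) * π (i + N)|
      ≤ ∑' i, |(f k - f (i + N)) * π (i + N)| := by
        simpa only [Real.norm_eq_abs] using
          norm_tsum_le_tsum_norm (f := fun i => (f k - f (i + N)) * π (i + N)) habs
    _ ≤ _ := habs.tsum_le_tsum hpt hdom

end centredPartialSum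

section BirthDeath

variable {α β : ℝ} {π : ℕ → ℝ}

theorem pbd_pos (hα : 0 < α) (hβ : 0 < β) {C : ℝ} (hC : 0 < C)
    (hπ : ∀ n : ℕ, π n =
      C * α ^ n / ∏ i ∈ range n, (β * ((i : ℝ) + 1) + ((i : ℝ) + 1) * (i : ℝ))) (n : ℕ) :
    0 < π n := by
  rw [hπ n]
  exact div_pos (by positivity) (Finset.prod_pos fun i _ => by positivity)

theorem pbd_succ (hβ : 0 < β) {C : ℝ}
    (hπ : ∀ n : ℕ, π n =
      C * α ^ n / ∏ i ∈ range n, (β * ((i : ℝ) + 1) + ((i : ℝ) + 1) * (i : ℝ))) (n : ℕ) :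
    ((n : ℝ) + 1) * (β + n) * π (n + 1) = α * π n := by
  have hprod : ∏ i ∈ range n, (β * ((i : ℝ) + 1) + ((i : ℝ) + 1) * (i : ℝ)) ≠ 0 :=
    (Finset.prod_pos fun i _ => by positivity).ne'
  have hlast : β * ((n : ℝ) + 1) + ((n : ℝ) + 1) * (n : ℝ) ≠ 0 := by positivity
  rw [hπ n, hπ (n + 1), Finset.prod_range_succ]
  field_simp
  ring

theorem summable_natCast_mul_of_succ (hβ : 0 < β) (hπ0 : ∀ n, 0 ≤ π n)
    (hrec : ∀ n : ℕ, ((n : ℝ) + 1) * (β + n) * π (n + 1) = α * π n) (hπ : Summable π) :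
    Summable fun k : ℕ => (k : ℝ) * π k := by
  refine (summable_nat_add_iff 1 (f := fun k : ℕ => (k : ℝ) * π k)).mp ?_
  refine (hπ.mul_left (α / β)).of_nonneg_of_le
    (fun k => mul_nonneg k.succ.cast_nonneg (hπ0 _)) fun k => ?_
  have hβk : β ≤ β + k := le_add_of_nonneg_right k.cast_nonneg
  rw [div_mul_eq_mul_div, le_div_iff₀ hβ, ← hrec k]
  push_cast
  nlinarith [hπ0 (k + 1), mul_nonneg (k.cast_nonneg : (0 : ℝ) ≤ k) (hπ0 (k + 1))]

/- The increments `s i = (i + 1) π (i + 1) - m π i` sum to `0` and have the sign of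
`α - m (β + i)`, which changes at most once, from `+` to `-`. -/
theorem centredPartialSum_neg_natCast_le (hβ : 0 < β) (hπ0 : ∀ n, 0 ≤ π n)
    (hrec : ∀ n : ℕ, ((n : ℝ) + 1) * (β + n) * π (n + 1) = α * π n) (hπ : Summable π)
    (hπ1 : ∑' j, π j = 1) (n : ℕ) :
    centredPartialSum π (fun k => -(k : ℝ)) (n + 1) ≤ (∑' k : ℕ, (k : ℝ) * π k) * π n := by
  have hmean := summable_natCast_mul_of_succ hβ hπ0 hrec hπ
  set m := ∑' k : ℕ, (k : ℝ) * π k with hm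
  have hm0 : 0 ≤ m := tsum_nonneg fun k => mul_nonneg k.cast_nonneg (hπ0 k)
  set s : ℕ → ℝ := fun i => ((i : ℝ) + 1) * π (i + 1) - m * π i with hs
  have hshift : Summable fun i : ℕ => ((i : ℝ) + 1) * π (i + 1) := by
    simpa only [Nat.cast_succ] using
      (summable_nat_add_iff 1 (f := fun k : ℕ => (k : ℝ) * π k)).mpr hmean
  have hs_sum : ∑' i, s i = 0 := by
    have htail : ∑' i : ℕ, ((i : ℝ) + 1) * π (i + 1) = m := by
      simpa only [Nat.cast_succ, Nat.cast_zero, zero_mul, zero_add] using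
        (hmean.tsum_eq_zero_add).symm
    rw [hs, hshift.tsum_sub (hπ.mul_left m), tsum_mul_left, hπ1, htail, mul_one, sub_self]
  have hs_sign : ∀ i, (β + i) * s i = π i * (α - m * (β + i)) := by
    intro i
    simp only [hs]
    linear_combination hrec i
  have hpartial := sum_range_nonneg_of_tsum_eq_zero (hshift.sub (hπ.mul_left m)) hs_sum
    (fun i j hij hi => by
      have hi' : α - m * (β + i) < 0 := by
        by_contra! h
        nlinarith [hs_sign i, mul_nonneg (hπ0 i) h, (by positivity : (0 : ℝ) < β + i)]
      have hj : π j * (α - m * (β + j)) ≤ 0 := by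
        have : (i : ℝ) ≤ j := by exact_mod_cast hij
        exact mul_nonpos_of_nonneg_of_nonpos (hπ0 j) (by nlinarith)
      have hβj : (0 : ℝ) < β + j := by positivity
      nlinarith [hs_sign j]) n
  have hcentre : centredPartialSum π (fun k => -(k : ℝ)) (n + 1)
      = m * π n - ∑ i ∈ range n, s i := by
    have hshift_sum : ∑ k ∈ range (n + 1), (k : ℝ) * π k
        = ∑ i ∈ range n, ((i : ℝ) + 1) * π (i + 1) := by
      simp [Finset.sum_range_succ']
    calc centredPartialSum π (fun k => -(k : ℝ)) (n + 1)
        = m * ∑ k ∈ range (n + 1), π k - ∑ k ∈ range (n + 1), (k : ℝ) * π k := by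
          simp only [centredPartialSum, neg_mul, tsum_neg, ← hm, Finset.mul_sum,
            ← Finset.sum_sub_distrib]
          exact Finset.sum_congr rfl fun k _ => by ring
      _ = m * π n - ∑ i ∈ range n, s i := by
          rw [hshift_sum, Finset.sum_range_succ]
          simp only [hs, Finset.sum_sub_distrib, ← Finset.mul_sum]
          ring
  linarith

theorem mul_steinSolution_eq (hrec : ∀ n : ℕ, ((n : ℝ) + 1) * (β + n) * π (n + 1) = α * π n)
    {f g : ℕ → ℝ} {c : ℝ}
    (hg : ∀ n : ℕ, α * g (n + 1) - (β * (n : ℝ) + (n : ℝ) * ((n : ℝ) - 1)) * g n = f n - c)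
    (n : ℕ) : α * (π n * g (n + 1)) = ∑ k ∈ range (n + 1), π k * (f k - c) := by
  induction n with
  | zero =>
    rw [Finset.sum_range_one]
    linear_combination π 0 * hg 0
  | succ n ih =>
    have hstep := hg (n + 1)
    push_cast at hstep
    rw [Finset.sum_range_succ, ← ih]
    linear_combination π (n + 1) * hstep + g (n + 1) * hrec n

theorem abs_steinSolution_le (hα : 0 < α) (hβ : 0 < β) (hπ0 : ∀ n, 0 < π n)
    (hrec : ∀ n : ℕ, ((n : ℝ) + 1) * (β + n) * π (n + 1) = α * π n) (hπ : Summable π)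
    (hπ1 : ∑' j, π j = 1) {f g : ℕ → ℝ} (hf : ∀ x y : ℕ, |f x - f y| ≤ |(x : ℝ) - (y : ℝ)|)
    (hfs : Summable fun n => |f n| * π n) (hg0 : g 0 = g 1)
    (hg : ∀ n : ℕ, α * g (n + 1) - (β * (n : ℝ) + (n : ℝ) * ((n : ℝ) - 1)) * g n
      = f n - ∑' k, f k * π k)
    (n : ℕ) : |g n| ≤ (1 / α) * ∑' k : ℕ, (k : ℝ) * π k := by
  have hπ0' : ∀ n, 0 ≤ π n := fun n => (hπ0 n).le
  have hfπ : Summable fun j => f j * π j := by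
    refine Summable.of_abs (hfs.congr fun j => ?_)
    rw [abs_mul, abs_of_pos (hπ0 j)]
  have hsucc : ∀ n, |g (n + 1)| ≤ (1 / α) * ∑' k : ℕ, (k : ℝ) * π k := by
    intro n
    have hbound : α * (π n * |g (n + 1)|) ≤ (∑' k : ℕ, (k : ℝ) * π k) * π n :=
      calc α * (π n * |g (n + 1)|) = |centredPartialSum π f (n + 1)| := by
            rw [centredPartialSum, ← mul_steinSolution_eq hrec hg n, abs_mul, abs_mul,
              abs_of_pos hα, abs_of_pos (hπ0 n)]
        _ ≤ centredPartialSum π (fun k => -(k : ℝ)) (n + 1) :=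
            abs_centredPartialSum_le hπ0' hπ hπ1 (summable_natCast_mul_of_succ hβ hπ0' hrec hπ)
              hf hfπ _
        _ ≤ _ := centredPartialSum_neg_natCast_le hβ hπ0' hrec hπ hπ1 n
    rw [one_div_mul_eq_div, le_div_iff₀ hα]
    nlinarith [hπ0 n]
  cases n with
  | zero => exact hg0 ▸ hsucc 0
  | succ n => exact hsucc n

end BirthDeath

/-- For every 1-Lipschitz `f : ℕ → ℝ` and every `n`, the Stein solution of the
PBD(α;0,β,1) Stein equation satisfies `|g_f n| ≤ (1/α) ∑_{k≥1} k π_k`; for `f₁ k = -k` the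
bound is attained at `n = 1`; consequently the supremum over all 1-Lipschitz `f` and all `n`
of `|g_f n|` equals `(1/α) ∑_{k≥1} k π_k`. -/
theorem stmt_0 (α β : ℝ) (hα : 0 < α) (hβ : 0 < β)
    (C : ℝ) (hC : 0 < C) (π : ℕ → ℝ)
    (hπ : ∀ n : ℕ, π n =
      C * α ^ n / ∏ i ∈ Finset.range n, (β * ((i : ℝ) + 1) + ((i : ℝ) + 1) * (i : ℝ)))
    (hπ1 : ∑' n, π n = 1)
    (f : ℕ → ℝ) (hf : ∀ x y : ℕ, |f x - f y| ≤ |(x : ℝ) - (y : ℝ)|)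
    (hfs : Summable fun n => |f n| * π n)
    (g : ℕ → ℝ) (hg0 : g 0 = g 1)
    (hg : ∀ n : ℕ, α * g (n + 1) - (β * (n : ℝ) + (n : ℝ) * ((n : ℝ) - 1)) * g n
      = f n - ∑' k, f k * π k)
    (g₁ : ℕ → ℝ) (hg₁0 : g₁ 0 = g₁ 1)
    (hg₁ : ∀ n : ℕ, α * g₁ (n + 1) - (β * (n : ℝ) + (n : ℝ) * ((n : ℝ) - 1)) * g₁ n
      = -(n : ℝ) - ∑' k : ℕ, -(k : ℝ) * π k) :
    (∀ n : ℕ, |g n| ≤ (1 / α) * ∑' k : ℕ, (k : ℝ) * π k) ∧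
    g₁ 1 = (1 / α) * ∑' k : ℕ, (k : ℝ) * π k ∧
    IsGreatest {x : ℝ | ∃ f' g' : ℕ → ℝ,
        (∀ u v : ℕ, |f' u - f' v| ≤ |(u : ℝ) - (v : ℝ)|) ∧
        (Summable fun n => |f' n| * π n) ∧ g' 0 = g' 1 ∧
        (∀ n : ℕ, α * g' (n + 1) - (β * (n : ℝ) + (n : ℝ) * ((n : ℝ) - 1)) * g' n
          = f' n - ∑' k, f' k * π k) ∧
        ∃ n : ℕ, x = |g' n|}
      ((1 / α) * ∑' k : ℕ, (k : ℝ) * π k) := by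
  have hπ0 := pbd_pos hα hβ hC hπ
  have hrec := pbd_succ hβ hπ
  have hπs : Summable π := by
    by_contra h
    simp [tsum_eq_zero_of_not_summable h] at hπ1
  have hbound := fun {f g : ℕ → ℝ} =>
    abs_steinSolution_le (f := f) (g := g) hα hβ hπ0 hrec hπs hπ1
  have hg₁1 : g₁ 1 = (1 / α) * ∑' k : ℕ, (k : ℝ) * π k := by
    have h := hg₁ 0
    simp only [Nat.cast_zero, mul_zero, zero_mul, sub_zero, neg_zero, zero_sub, neg_mul,
      tsum_neg, neg_neg, zero_add] at h
    rw [← h]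
    field_simp
  refine ⟨hbound hf hfs hg0 hg, hg₁1, ⟨fun k => -(k : ℝ), g₁, ?_, ?_, hg₁0, hg₁, 1, ?_⟩, ?_⟩
  · intro u v
    rw [neg_sub_neg, abs_sub_comm]
  · simpa only [abs_neg, Nat.abs_cast] using
      summable_natCast_mul_of_succ hβ (fun n => (hπ0 n).le) hrec hπs
  · rw [hg₁1, abs_of_nonneg]
    exact mul_nonneg (by positivity) (tsum_nonneg fun k => mul_nonneg k.cast_nonneg (hπ0 k).le)
  · rintro x ⟨f', g', hf', hfs', hg0', hg', n, rfl⟩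
    exact hbound hf' hfs' hg0' hg' n
end

section
/- For every 1-Lipschitz function f : ℤ₊ → ℝ and every n ∈ ℤ₊, the Stein solution satisfies |g_f(n)| ≤ min( 1/(β + 2α/(α+2β+2)), (√(α + (1−β)²/4) + (1−β)/2)/α ). -/
/-!
Multiplying the Stein equation by `π n` and telescoping with the detailed-balance relation
`d (n + 1) * π (n + 1) = α * π n`, where `d n = β n + n (n - 1)`, gives
`α π_n g(n+1) = ∑_{k ≤ n} (f k - π f) π_k`. For 1-Lipschitz `f` this is at most
`∑_{k ≤ n} (μ - k) π_k` in absolute value, `μ` being the mean of `π`, and that is at most `μ π_n`: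
the terms `(α k - μ d k) π_k` have total mass `α μ - μ α = 0` and change sign once, from `+` to `-`,
so all their partial sums are nonnegative. Hence `|g| ≤ μ / α`. Both constants of the theorem
bound `μ / α` from above, by moment inequalities that come from the Stein identity
`E[p(X) d(X)] = α E[p(X + 1)]` for `p = 1, X - 1, (X - 1)(X - 2)` and from `Var X ≥ 0`.
-/

open Finset Polynomial
open scoped Nat

noncomputable def pbdDeath (β : ℝ) : ℝ[X] := C β * X + X * (X - 1)

@[simp] lemma eval_pbdDeath (β x : ℝ) : (pbdDeath β).eval x = β * x + x * (x - 1) := by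
  simp [pbdDeath]

noncomputable def polyExpect (π : ℕ → ℝ) (p : ℝ[X]) : ℝ := ∑' n : ℕ, p.eval (n : ℝ) * π n

section Expectation

variable {π : ℕ → ℝ}

lemma polyExpect_add (hs : ∀ p : ℝ[X], Summable fun n : ℕ => p.eval (n : ℝ) * π n)
    (p q : ℝ[X]) : polyExpect π (p + q) = polyExpect π p + polyExpect π q := by
  simp only [polyExpect, eval_add, add_mul]
  exact (hs p).tsum_add (hs q)

lemma polyExpect_sub (hs : ∀ p : ℝ[X], Summable fun n : ℕ => p.eval (n : ℝ) * π n)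
    (p q : ℝ[X]) : polyExpect π (p - q) = polyExpect π p - polyExpect π q := by
  simp only [polyExpect, eval_sub, sub_mul]
  exact (hs p).tsum_sub (hs q)

lemma polyExpect_C_mul (a : ℝ) (p : ℝ[X]) : polyExpect π (C a * p) = a * polyExpect π p := by
  simp only [polyExpect, eval_mul, eval_C, mul_assoc, tsum_mul_left]

lemma polyExpect_one (hπ1 : ∑' n, π n = 1) : polyExpect π 1 = 1 := by
  simpa [polyExpect] using hπ1

lemma polyExpect_X : polyExpect π X = ∑' n : ℕ, (n : ℝ) * π n := by
  simp [polyExpect]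

lemma polyExpect_nonneg (hπ0 : ∀ n, 0 ≤ π n) {p : ℝ[X]} (hp : ∀ n : ℕ, 0 ≤ p.eval (n : ℝ)) :
    0 ≤ polyExpect π p :=
  tsum_nonneg fun n => mul_nonneg (hp n) (hπ0 n)

end Expectation

lemma tsum_mul_eq_sum_range_add {π u : ℕ → ℝ} (hπ : Summable π)
    (hu : Summable fun n => u n * π n) (n : ℕ) :
    ∑' j, u j * π j = ∑ k ∈ range n, u k * π k
      + (u n * ∑' i, π (i + n) + ∑' i, (u (i + n) - u n) * π (i + n)) := by
  have hπn : Summable fun i => π (i + n) := (summable_nat_add_iff n).2 hπ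
  have hdev : Summable fun i => (u (i + n) - u n) * π (i + n) :=
    (((summable_nat_add_iff n).2 hu).sub (hπn.mul_left (u n))).congr fun i => by ring
  rw [← hu.sum_add_tsum_nat_add n, ← tsum_mul_left, ← (hπn.mul_left _).tsum_add hdev]
  congr 1
  exact tsum_congr fun i => by ring

section Lipschitz

variable {π f : ℕ → ℝ}

lemma abs_sum_range_sub_mul_le (hπ0 : ∀ n, 0 ≤ π n)
    (hf : ∀ x y : ℕ, |f x - f y| ≤ |(x : ℝ) - (y : ℝ)|) (n : ℕ) :
    |∑ k ∈ range n, (f k - f n) * π k| ≤ ∑ k ∈ range n, ((n : ℝ) - k) * π k := by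
  refine (abs_sum_le_sum_abs _ _).trans (sum_le_sum fun k hk => ?_)
  have hkn : (k : ℝ) ≤ n := by exact_mod_cast (mem_range.mp hk).le
  rw [abs_mul, abs_of_nonneg (hπ0 k)]
  refine mul_le_mul_of_nonneg_right ?_ (hπ0 k)
  simpa [abs_of_nonpos (sub_nonpos.mpr hkn)] using hf k n

lemma abs_tsum_sub_mul_le (hπ0 : ∀ n, 0 ≤ π n) (hπ : Summable π)
    (hidπ : Summable fun n : ℕ => (n : ℝ) * π n)
    (hf : ∀ x y : ℕ, |f x - f y| ≤ |(x : ℝ) - (y : ℝ)|) (n : ℕ) :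
    |∑' i, (f (i + n) - f n) * π (i + n)| ≤ ∑' i : ℕ, (i : ℝ) * π (i + n) := by
  have hidπn : Summable fun i : ℕ => (i : ℝ) * π (i + n) :=
    (((summable_nat_add_iff n).2 hidπ).sub (((summable_nat_add_iff n).2 hπ).mul_left (n : ℝ))).congr
      fun i => by push_cast; ring
  rw [← Real.norm_eq_abs]
  refine tsum_of_norm_bounded hidπn.hasSum fun i => ?_
  rw [Real.norm_eq_abs, abs_mul, abs_of_nonneg (hπ0 _)]
  exact mul_le_mul_of_nonneg_right (by simpa using hf (i + n) n) (hπ0 _)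

lemma abs_sum_range_sub_tsum_mul_le (hπ0 : ∀ n, 0 ≤ π n) (hπ : Summable π)
    (hπ1 : ∑' n, π n = 1) (hidπ : Summable fun n : ℕ => (n : ℝ) * π n)
    (hfπ : Summable fun n => f n * π n) (hf : ∀ x y : ℕ, |f x - f y| ≤ |(x : ℝ) - (y : ℝ)|)
    (n : ℕ) :
    |∑ k ∈ range n, (f k - ∑' j, f j * π j) * π k|
      ≤ ∑ k ∈ range n, ((∑' j : ℕ, (j : ℝ) * π j) - k) * π k := by
  set P := ∑ k ∈ range n, π k
  set Q := ∑' i, π (i + n)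
  have hPQ : P + Q = 1 := (hπ.sum_add_tsum_nat_add n).trans hπ1
  have hP : 0 ≤ P := sum_nonneg fun k _ => hπ0 k
  have hQ : 0 ≤ Q := tsum_nonneg fun i => hπ0 _
  have hmean := tsum_mul_eq_sum_range_add hπ hidπ n
  push_cast at hmean
  simp only [add_sub_cancel_right] at hmean
  -- Since `P + Q = 1`, the left side does not change when `f n` is subtracted from `f`.
  have hsplit : ∑ k ∈ range n, (f k - ∑' j, f j * π j) * π k
      = Q * ∑ k ∈ range n, (f k - f n) * π k - P * ∑' i, (f (i + n) - f n) * π (i + n) := by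
    simp only [tsum_mul_eq_sum_range_add hπ hfπ n, sub_mul, sum_sub_distrib, ← mul_sum]
    linear_combination -(∑ k ∈ range n, f k * π k) * hPQ
  have hsplit' : ∑ k ∈ range n, ((∑' j : ℕ, (j : ℝ) * π j) - k) * π k
      = Q * ∑ k ∈ range n, ((n : ℝ) - k) * π k + P * ∑' i : ℕ, (i : ℝ) * π (i + n) := by
    simp only [hmean, sub_mul, sum_sub_distrib, ← mul_sum]
    linear_combination (∑ k ∈ range n, (k : ℝ) * π k) * hPQ
  rw [hsplit, hsplit']
  calc _ ≤ |Q * ∑ k ∈ range n, (f k - f n) * π k| + |P * ∑' i, (f (i + n) - f n) * π (i + n)| :=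
        abs_sub _ _
    _ ≤ _ := by
        rw [abs_mul, abs_mul, abs_of_nonneg hP, abs_of_nonneg hQ]
        gcongr
        · exact abs_sum_range_sub_mul_le hπ0 hf n
        · exact abs_tsum_sub_mul_le hπ0 hπ hidπ hf n

end Lipschitz

lemma sum_range_nonneg_of_tsum_eq_zero_s1 {a : ℕ → ℝ} (ha : Summable a) (h0 : ∑' n, a n = 0)
    (hsign : ∀ k m, k ≤ m → a k < 0 → a m ≤ 0) (n : ℕ) : 0 ≤ ∑ k ∈ range n, a k := by
  by_cases h : ∃ k < n, a k < 0
  · obtain ⟨k, hk, hak⟩ := h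
    have htail : ∑' i, a (i + n) ≤ 0 := tsum_nonpos fun i => hsign k (i + n) (by omega) hak
    linarith [ha.sum_add_tsum_nat_add n]
  · push Not at h
    exact sum_nonneg fun k hk => h k (mem_range.mp hk)

section Recurrence

variable {α β : ℝ} {π : ℕ → ℝ}

lemma le_pow_div_factorial_of_rec (hα : 0 ≤ α) (hβ : 0 < β) (hπ0 : ∀ n, 0 ≤ π n)
    (hrec : ∀ n : ℕ, (pbdDeath β).eval (n + 1 : ℝ) * π (n + 1) = α * π n) (n : ℕ) :
    π n ≤ π 0 * (α / β) ^ n / n ! := by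
  induction n with
  | zero => simp
  | succ n ih =>
    have hdeath : β * (n + 1) * π (n + 1) ≤ α * π n := by
      have : 0 ≤ ((n : ℝ) + 1) * n * π (n + 1) := mul_nonneg (by positivity) (hπ0 _)
      rw [← hrec n, eval_pbdDeath]
      linear_combination this
    rw [Nat.factorial_succ, pow_succ, Nat.cast_mul, le_div_iff₀ (by positivity)]
    rw [le_div_iff₀ (by positivity)] at ih
    calc π (n + 1) * ((n + 1 : ℕ) * n !) = (β * (n + 1) * π (n + 1)) * n ! / β := by
          push_cast; field_simp
      _ ≤ α * π n * n ! / β := by gcongr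
      _ ≤ α * (π 0 * (α / β) ^ n) / β := by rw [mul_assoc]; gcongr
      _ = π 0 * ((α / β) ^ n * (α / β)) := by ring

lemma summable_pow_mul_of_rec (hα : 0 ≤ α) (hβ : 0 < β) (hπ0 : ∀ n, 0 ≤ π n)
    (hrec : ∀ n : ℕ, (pbdDeath β).eval (n + 1 : ℝ) * π (n + 1) = α * π n) (k : ℕ) :
    Summable fun n : ℕ => (n : ℝ) ^ k * π n := by
  refine Summable.of_nonneg_of_le (fun n => mul_nonneg (by positivity) (hπ0 n)) (fun n => ?_)
    ((Real.summable_pow_div_factorial (Real.exp 1 * (α / β))).mul_left (k ! * π 0))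
  have hpow : (n : ℝ) ^ k ≤ k ! * Real.exp 1 ^ n := by
    have := Real.pow_div_factorial_le_exp (n : ℝ) n.cast_nonneg k
    rw [div_le_iff₀ (by positivity)] at this
    rw [Real.exp_one_pow]
    linarith
  calc (n : ℝ) ^ k * π n ≤ (k ! * Real.exp 1 ^ n) * (π 0 * (α / β) ^ n / n !) :=
        mul_le_mul hpow (le_pow_div_factorial_of_rec hα hβ hπ0 hrec n) (hπ0 n) (by positivity)
    _ = k ! * π 0 * ((Real.exp 1 * (α / β)) ^ n / n !) := by ring

lemma summable_eval_mul_of_rec (hα : 0 ≤ α) (hβ : 0 < β) (hπ0 : ∀ n, 0 ≤ π n)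
    (hrec : ∀ n : ℕ, (pbdDeath β).eval (n + 1 : ℝ) * π (n + 1) = α * π n) (p : ℝ[X]) :
    Summable fun n : ℕ => p.eval (n : ℝ) * π n := by
  simp_rw [eval_eq_sum_range, Finset.sum_mul, mul_assoc]
  exact summable_sum fun i _ => (summable_pow_mul_of_rec hα hβ hπ0 hrec i).mul_left _

lemma polyExpect_mul_pbdDeath (hs : ∀ p : ℝ[X], Summable fun n : ℕ => p.eval (n : ℝ) * π n)
    (hrec : ∀ n : ℕ, (pbdDeath β).eval (n + 1 : ℝ) * π (n + 1) = α * π n) (p : ℝ[X]) :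
    polyExpect π (p * pbdDeath β) = α * polyExpect π (p.comp (X + 1)) := by
  rw [polyExpect, (hs _).tsum_eq_zero_add, polyExpect, ← tsum_mul_left]
  simp only [eval_mul, eval_comp, eval_add, eval_X, eval_one, Nat.cast_add, Nat.cast_one,
    Nat.cast_zero, mul_assoc, hrec]
  simp only [eval_pbdDeath, mul_zero, zero_mul, zero_add]
  exact tsum_congr fun n => by ring

lemma polyExpect_pbdDeath (hs : ∀ p : ℝ[X], Summable fun n : ℕ => p.eval (n : ℝ) * π n)
    (hπ1 : ∑' n, π n = 1)
    (hrec : ∀ n : ℕ, (pbdDeath β).eval (n + 1 : ℝ) * π (n + 1) = α * π n) :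
    polyExpect π (pbdDeath β) = α := by
  simpa [polyExpect_one hπ1] using polyExpect_mul_pbdDeath hs hrec 1

lemma sum_range_succ_eval_pbdDeath_mul
    (hrec : ∀ n : ℕ, (pbdDeath β).eval (n + 1 : ℝ) * π (n + 1) = α * π n) (n : ℕ) :
    ∑ k ∈ range (n + 1), (pbdDeath β).eval (k : ℝ) * π k = α * ∑ k ∈ range n, π k := by
  simp only [sum_range_succ', Nat.cast_add, Nat.cast_one, hrec, mul_sum]
  simp

lemma mul_sum_eq_of_stein (hrec : ∀ n : ℕ, (pbdDeath β).eval (n + 1 : ℝ) * π (n + 1) = α * π n)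
    {g h : ℕ → ℝ}
    (hg : ∀ n : ℕ, α * g (n + 1) - (β * (n : ℝ) + (n : ℝ) * ((n : ℝ) - 1)) * g n = h n) (n : ℕ) :
    α * π n * g (n + 1) = ∑ k ∈ range (n + 1), h k * π k := by
  induction n with
  | zero => simp [← hg 0]; ring
  | succ n ih =>
    rw [sum_range_succ, ← ih, ← hg (n + 1), ← hrec n]
    push_cast [eval_pbdDeath]
    ring

lemma mean_sq_add_mul_mean_le (hs : ∀ p : ℝ[X], Summable fun n : ℕ => p.eval (n : ℝ) * π n)
    (hπ0 : ∀ n, 0 ≤ π n) (hπ1 : ∑' n, π n = 1)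
    (hrec : ∀ n : ℕ, (pbdDeath β).eval (n + 1 : ℝ) * π (n + 1) = α * π n) :
    polyExpect π X ^ 2 + (β - 1) * polyExpect π X ≤ α := by
  set μ := polyExpect π X
  have hvar : 0 ≤ polyExpect π ((X - C μ) ^ 2) :=
    polyExpect_nonneg hπ0 fun n => by simp only [eval_pow]; positivity
  have hsq : (X - C μ) ^ 2 = pbdDeath β - C (β - 1 + 2 * μ) * X + C (μ ^ 2) * 1 := by
    simp only [pbdDeath, map_add, map_sub, map_mul, map_one, map_pow, map_ofNat]
    ring
  rw [hsq, polyExpect_add hs, polyExpect_sub hs, polyExpect_C_mul, polyExpect_C_mul,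
    polyExpect_pbdDeath hs hπ1 hrec, polyExpect_one hπ1] at hvar
  linarith

lemma two_mul_mul_mean_le (hβ : 0 ≤ β)
    (hs : ∀ p : ℝ[X], Summable fun n : ℕ => p.eval (n : ℝ) * π n)
    (hπ0 : ∀ n, 0 ≤ π n) (hπ1 : ∑' n, π n = 1)
    (hrec : ∀ n : ℕ, (pbdDeath β).eval (n + 1 : ℝ) * π (n + 1) = α * π n) :
    2 * α * polyExpect π X ≤ (α + 2 * β + 2) * (α - β * polyExpect π X) := by
  set μ := polyExpect π X
  have hfact : polyExpect π (X * (X - 1)) = α - β * μ := by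
    have := polyExpect_pbdDeath hs hπ1 hrec
    rw [pbdDeath, polyExpect_add hs, polyExpect_C_mul] at this
    linarith
  have h1 : polyExpect π ((X - 1) * pbdDeath β) = α * μ := by
    rw [polyExpect_mul_pbdDeath hs hrec]
    simp [μ]
  have h2 : polyExpect π ((X - 1) * (X - 2) * pbdDeath β) = α * (α - β * μ) := by
    rw [polyExpect_mul_pbdDeath hs hrec, ← hfact]
    congr 2
    simp only [sub_comp, mul_comp, X_comp, one_comp, ofNat_comp]
    ring
  have hnonneg : 0 ≤ polyExpect π (X * (X - 1) * (X - 2) * (X + C β - 3)) := by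
    refine polyExpect_nonneg hπ0 fun n => ?_
    obtain _ | _ | _ | n := n
    · simp
    · simp
    · norm_num
    · simp only [eval_mul, eval_sub, eval_add, eval_X, eval_C, eval_one, eval_ofNat]
      push_cast
      ring_nf
      positivity
  have hdecomp : X * (X - 1) * (X - 2) * (X + C β - 3) = (X - 1) * (X - 2) * pbdDeath β
      - C 2 * ((X - 1) * pbdDeath β) + C (2 * β + 2) * (X * (X - 1)) := by
    simp only [pbdDeath, map_add, map_mul, map_ofNat]
    ring
  rw [hdecomp, polyExpect_add hs, polyExpect_sub hs, polyExpect_C_mul, polyExpect_C_mul, h1, h2,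
    hfact] at hnonneg
  linarith

lemma sum_range_succ_mean_sub_mul_le (hα : 0 < α)
    (hs : ∀ p : ℝ[X], Summable fun n : ℕ => p.eval (n : ℝ) * π n)
    (hπ0 : ∀ n, 0 ≤ π n) (hπ1 : ∑' n, π n = 1)
    (hrec : ∀ n : ℕ, (pbdDeath β).eval (n + 1 : ℝ) * π (n + 1) = α * π n) (n : ℕ) :
    ∑ k ∈ range (n + 1), (polyExpect π X - k) * π k ≤ polyExpect π X * π n := by
  set μ := polyExpect π X
  set q : ℝ[X] := C α * X - C μ * pbdDeath β
  have hμ : 0 ≤ μ := polyExpect_nonneg hπ0 fun n => by simp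
  have hq : ∀ x : ℝ, q.eval x = x * (α - μ * (β + x - 1)) := fun x => by simp [q]; ring
  have htotal : ∑' k : ℕ, q.eval (k : ℝ) * π k = 0 := by
    change polyExpect π q = 0
    rw [polyExpect_sub hs, polyExpect_C_mul, polyExpect_C_mul, polyExpect_pbdDeath hs hπ1 hrec]
    ring
  have hsign : ∀ k m : ℕ, k ≤ m → q.eval (k : ℝ) * π k < 0 → q.eval (m : ℝ) * π m ≤ 0 := by
    intro k m hkm hk
    rw [hq] at hk ⊢
    have hk' : α - μ * (β + k - 1) < 0 := by
      by_contra! h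
      exact hk.not_ge (mul_nonneg (mul_nonneg k.cast_nonneg h) (hπ0 k))
    have hm : α - μ * (β + m - 1) < 0 := by
      have : (k : ℝ) ≤ m := by exact_mod_cast hkm
      nlinarith
    exact mul_nonpos_of_nonpos_of_nonneg (mul_nonpos_of_nonneg_of_nonpos m.cast_nonneg hm.le)
      (hπ0 m)
  have hhead : ∑ k ∈ range (n + 1), q.eval (k : ℝ) * π k
      = α * (μ * π n - ∑ k ∈ range (n + 1), (μ - k) * π k) := by
    simp only [q, eval_sub, eval_mul, eval_C, eval_X, sub_mul, sum_sub_distrib, mul_assoc,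
      ← mul_sum, sum_range_succ_eval_pbdDeath_mul hrec n]
    simp only [sum_range_succ]
    ring
  have := sum_range_nonneg_of_tsum_eq_zero_s1 (hs q) htotal hsign (n + 1)
  rw [hhead, mul_nonneg_iff_of_pos_left hα] at this
  linarith

end Recurrence

lemma div_le_min_of_moment_bounds {α β μ : ℝ} (hα : 0 < α) (hβ : 0 < β)
    (hvar : μ ^ 2 + (β - 1) * μ ≤ α) (h3 : 2 * α * μ ≤ (α + 2 * β + 2) * (α - β * μ)) :
    μ / α ≤ min (1 / (β + 2 * α / (α + 2 * β + 2)))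
      ((Real.sqrt (α + (1 - β) ^ 2 / 4) + (1 - β) / 2) / α) := by
  refine le_min ?_ (div_le_div_of_nonneg_right ?_ hα.le)
  · rw [div_le_div_iff₀ hα (by positivity)]
    field_simp
    linarith
  · have := Real.abs_le_sqrt (x := μ - (1 - β) / 2) (y := α + (1 - β) ^ 2 / 4) (by linarith)
    linarith [le_abs_self (μ - (1 - β) / 2)]

section ClosedForm

variable {α β C : ℝ} {π : ℕ → ℝ}

lemma prod_pbd_pos (hβ : 0 < β) (n : ℕ) :
    0 < ∏ i ∈ range n, (β * ((i : ℝ) + 1) + ((i : ℝ) + 1) * (i : ℝ)) :=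
  prod_pos fun i _ => by positivity

lemma pos_of_pbd_formula (hα : 0 < α) (hβ : 0 < β) (hC : 0 < C)
    (hπ : ∀ n : ℕ, π n =
      C * α ^ n / ∏ i ∈ range n, (β * ((i : ℝ) + 1) + ((i : ℝ) + 1) * (i : ℝ))) (n : ℕ) :
    0 < π n := by
  rw [hπ]
  have := prod_pbd_pos hβ n
  positivity

lemma rec_of_pbd_formula (hβ : 0 < β)
    (hπ : ∀ n : ℕ, π n =
      C * α ^ n / ∏ i ∈ range n, (β * ((i : ℝ) + 1) + ((i : ℝ) + 1) * (i : ℝ))) (n : ℕ) :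
    (pbdDeath β).eval (n + 1 : ℝ) * π (n + 1) = α * π n := by
  rw [hπ, hπ, prod_range_succ, eval_pbdDeath]
  have := (prod_pbd_pos hβ n).ne'
  have : β * ((n : ℝ) + 1) + ((n : ℝ) + 1) * n ≠ 0 := by positivity
  field_simp
  ring

end ClosedForm

/-- bound on `|g_f n|` for the PBD(α;0,β,1) Stein solution. -/
theorem stmt_1
    (α β : ℝ) (hα : 0 < α) (hβ : 0 < β)
    (C : ℝ) (hC : 0 < C) (π : ℕ → ℝ)
    (hπ : ∀ n : ℕ, π n =
      C * α ^ n / ∏ i ∈ Finset.range n, (β * ((i : ℝ) + 1) + ((i : ℝ) + 1) * (i : ℝ)))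
    (hπ1 : ∑' n, π n = 1)
    (f : ℕ → ℝ) (hf : ∀ x y : ℕ, |f x - f y| ≤ |(x : ℝ) - (y : ℝ)|)
    (hfs : Summable fun n => |f n| * π n)
    (g : ℕ → ℝ) (hg0 : g 0 = g 1)
    (hg : ∀ n : ℕ, α * g (n + 1) - (β * (n : ℝ) + (n : ℝ) * ((n : ℝ) - 1)) * g n
      = f n - ∑' k, f k * π k)
    :
    ∀ n : ℕ, |g n| ≤
      min (1 / (β + 2 * α / (α + 2 * β + 2)))
        ((Real.sqrt (α + (1 - β) ^ 2 / 4) + (1 - β) / 2) / α) := by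
  have hpos := pos_of_pbd_formula hα hβ hC hπ
  have hπ0 : ∀ n, 0 ≤ π n := fun n => (hpos n).le
  have hrec := rec_of_pbd_formula hβ hπ
  have hs := summable_eval_mul_of_rec hα.le hβ hπ0 hrec
  have hfπ : Summable fun n => f n * π n :=
    hfs.of_norm_bounded fun n => by rw [Real.norm_eq_abs, abs_mul, abs_of_nonneg (hπ0 n)]
  have hbound : ∀ n, |g (n + 1)| ≤ polyExpect π X / α := fun n => by
    rw [le_div_iff₀ hα, ← mul_le_mul_iff_of_pos_right (hpos n)]
    calc |g (n + 1)| * α * π n = |α * π n * g (n + 1)| := by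
          rw [abs_mul, abs_mul, abs_of_pos hα, abs_of_pos (hpos n)]; ring
      _ = |∑ k ∈ range (n + 1), (f k - ∑' j, f j * π j) * π k| := by
          rw [mul_sum_eq_of_stein hrec hg]
      _ ≤ ∑ k ∈ range (n + 1), (polyExpect π X - k) * π k := by
          rw [polyExpect_X]
          exact abs_sum_range_sub_tsum_mul_le hπ0 (by simpa using hs 1) hπ1
            (by simpa using hs X) hfπ hf (n + 1)
      _ ≤ polyExpect π X * π n := sum_range_succ_mean_sub_mul_le hα hs hπ0 hπ1 hrec n
  have hmean := div_le_min_of_moment_bounds hα hβ (mean_sq_add_mul_mean_le hs hπ0 hπ1 hrec)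
    (two_mul_mul_mean_le hβ.le hs hπ0 hπ1 hrec)
  rintro (_ | n)
  · rw [hg0]
    exact (hbound 0).trans hmean
  · exact (hbound n).trans hmean
end

section
/- For every 1-Lipschitz function f : ℤ₊ → ℝ and every n ∈ ℤ₊, the Stein solution satisfies |g̃_f(n)| ≤ min( 1/(1 + 2ab/(a+2b+2)), (√(ab + (b−1)²/4) + (b−1)/2)/(ab) ). -/
/-!
Pivoting at `f n`, with `P = ∑_{k ≤ n} π_k`,
`∑_{k ≤ n} (f k - π f) π_k = (1 - P) ∑_{k ≤ n} (f k - f n) π_k - P ∑_{j > n} (f j - f n) π_j`,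
so for 1-Lipschitz `f` the Stein solution is dominated by the one for `f = -id`:
`|g̃_f (n + 1)| ≤ G n := ∑_{k ≤ n} (μ - k) π_k / (a π_n)`, `μ` the mean of `π`.
`G` solves `a G (n + 1) = λ_{n+1} G n + μ - (n + 1)`, `G 0 = μ / a`, and `G n = O(1 / n)`.
Once `G` rises to above a level `c` with `(1 + 2b(n + 1)) c ≥ 1`, the gap
`λ_{n+2} - λ_{n+1} = 1 + 2b(n + 1)` keeps it rising forever, against the decay; so `μ ≤ a c`
gives `G ≤ c`. The bounds on `μ` come from the factorial-moment recurrence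
`a m_r = (1 + r b) m_{r+1} + b m_{r+2}` and `m_1² ≤ m_2 + m_1`; for `c = 1 / θ`,
`θ² + (b - 1) θ = a b`, a rise at a step with `1 + 2b(n + 1) < θ` is excluded directly.
-/

open Finset Filter

noncomputable section

namespace PBD

def deathRate (b : ℝ) (n : ℕ) : ℝ := n + b * n * (n - 1)

variable {a b : ℝ} {π f : ℕ → ℝ}

@[simp] lemma deathRate_zero : deathRate b 0 = 0 := by simp [deathRate]

lemma deathRate_succ (n : ℕ) : deathRate b (n + 1) = (n + 1) * (1 + b * n) := by
  simp only [deathRate]; push_cast; ring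

lemma deathRate_succ_pos (hb : 0 ≤ b) (n : ℕ) : 0 < deathRate b (n + 1) := by
  rw [deathRate_succ]; positivity

lemma le_deathRate_succ (hb : 0 ≤ b) (n : ℕ) : (n : ℝ) + 1 ≤ deathRate b (n + 1) := by
  rw [deathRate_succ]; nlinarith [mul_nonneg hb (Nat.cast_nonneg (α := ℝ) n)]

structure IsPBD (a b : ℝ) (π : ℕ → ℝ) : Prop where
  a_pos : 0 < a
  b_pos : 0 < b
  pos : ∀ n, 0 < π n
  balance : ∀ n, a * π n = deathRate b (n + 1) * π (n + 1)
  hasSum : HasSum π 1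

lemma isPBD_of_eq_prod {C : ℝ} (ha : 0 < a) (hb : 0 < b) (hC : 0 < C)
    (hπ : ∀ n, π n = C * a ^ n / ∏ i ∈ range n, deathRate b (i + 1)) (hπ1 : ∑' n, π n = 1) :
    IsPBD a b π where
  a_pos := ha
  b_pos := hb
  pos n := by
    rw [hπ n]
    exact div_pos (by positivity) (prod_pos fun i _ => deathRate_succ_pos hb.le i)
  balance n := by
    have := deathRate_succ_pos hb.le n
    have := prod_pos fun i (_ : i ∈ range n) => deathRate_succ_pos hb.le i
    rw [hπ, hπ, prod_range_succ]
    field_simp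
    ring
  hasSum := by
    by_cases hs : Summable π
    · exact hs.hasSum_iff.mpr hπ1
    · rw [tsum_eq_zero_of_not_summable hs] at hπ1
      exact absurd hπ1 zero_ne_one

lemma IsPBD.summable_pow_mul (h : IsPBD a b π) (r : ℕ) :
    Summable fun k : ℕ => (k : ℝ) ^ r * π k := by
  refine summable_of_ratio_norm_eventually_le (r := 1 / 2) (by norm_num) ?_
  filter_upwards [eventually_ge_atTop 1, eventually_ge_atTop ⌈2 ^ (r + 1) * a⌉₊] with k hk1 hka
  have hk : (1 : ℝ) ≤ k := by exact_mod_cast hk1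
  have hka' : 2 ^ (r + 1) * a ≤ k := Nat.ceil_le.mp hka
  have hp := h.pos k
  have hpow : ((k : ℝ) + 1) ^ r ≤ 2 ^ r * (k : ℝ) ^ r := by
    rw [← mul_pow]; exact pow_le_pow_left₀ (by positivity) (by linarith) r
  have hstep : ((k : ℝ) + 1) * π (k + 1) ≤ a * π k := by
    rw [h.balance]
    exact mul_le_mul_of_nonneg_right (le_deathRate_succ h.b_pos.le k) (h.pos _).le
  have hp1 := h.pos (k + 1)
  rw [Real.norm_of_nonneg (by positivity), Real.norm_of_nonneg (by positivity)]
  push_cast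
  have : ((k : ℝ) + 1) * (((k : ℝ) + 1) ^ r * π (k + 1)) ≤
      ((k : ℝ) + 1) * (1 / 2 * ((k : ℝ) ^ r * π k)) :=
    calc ((k : ℝ) + 1) * (((k : ℝ) + 1) ^ r * π (k + 1))
        = ((k : ℝ) + 1) ^ r * (((k : ℝ) + 1) * π (k + 1)) := by ring
      _ ≤ (2 ^ r * (k : ℝ) ^ r) * (a * π k) :=
          mul_le_mul hpow hstep (by positivity) (by positivity)
      _ = (2 ^ (r + 1) * a) * ((k : ℝ) ^ r * π k) / 2 := by ring
      _ ≤ (k : ℝ) * ((k : ℝ) ^ r * π k) / 2 := by gcongr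
      _ ≤ ((k : ℝ) + 1) * (1 / 2 * ((k : ℝ) ^ r * π k)) := by
          nlinarith [show 0 ≤ (k : ℝ) ^ r * π k by positivity]
  exact le_of_mul_le_mul_left this (by positivity)

lemma cast_descFactorial_succ (n k : ℕ) :
    ((n.descFactorial (k + 1) : ℕ) : ℝ) = (n.descFactorial k : ℝ) * (n - k) := by
  rw [← descPochhammer_eval_eq_descFactorial, ← descPochhammer_eval_eq_descFactorial,
    descPochhammer_succ_eval]

def factorialMoment (π : ℕ → ℝ) (r : ℕ) : ℝ := ∑' k : ℕ, (k.descFactorial r : ℝ) * π k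

lemma IsPBD.hasSum_factorialMoment (h : IsPBD a b π) (r : ℕ) :
    HasSum (fun k : ℕ => (k.descFactorial r : ℝ) * π k) (factorialMoment π r) := by
  refine (Summable.of_nonneg_of_le (fun k => mul_nonneg (Nat.cast_nonneg _) (h.pos k).le)
    (fun k => ?_) (h.summable_pow_mul r)).hasSum
  exact mul_le_mul_of_nonneg_right (by exact_mod_cast Nat.descFactorial_le_pow k r) (h.pos k).le

lemma IsPBD.factorialMoment_zero (h : IsPBD a b π) : factorialMoment π 0 = 1 := by
  simpa [factorialMoment] using h.hasSum.tsum_eq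

lemma factorialMoment_one : factorialMoment π 1 = ∑' k : ℕ, (k : ℝ) * π k := by
  simp [factorialMoment]

lemma IsPBD.summable_cast_mul (h : IsPBD a b π) : Summable fun k : ℕ => (k : ℝ) * π k := by
  simpa using (h.hasSum_factorialMoment 1).summable

lemma IsPBD.factorialMoment_nonneg (h : IsPBD a b π) (r : ℕ) : 0 ≤ factorialMoment π r :=
  tsum_nonneg fun k => mul_nonneg (Nat.cast_nonneg _) (h.pos k).le

-- Stein's identity `a 𝔼 φ(X + 1) = 𝔼 λ(X) φ(X)` for the falling factorial `φ k = (k - 1)_r`.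
lemma IsPBD.factorialMoment_recurrence (h : IsPBD a b π) (r : ℕ) :
    a * factorialMoment π r =
      (1 + r * b) * factorialMoment π (r + 1) + b * factorialMoment π (r + 2) := by
  set F : ℕ → ℝ := fun k =>
    ((1 + r * b) * (k.descFactorial (r + 1) : ℝ) + b * (k.descFactorial (r + 2) : ℝ)) * π k
  have hF : HasSum F ((1 + r * b) * factorialMoment π (r + 1) + b * factorialMoment π (r + 2)) :=
    (((h.hasSum_factorialMoment (r + 1)).mul_left (1 + r * b)).add
      ((h.hasSum_factorialMoment (r + 2)).mul_left b)).congr_fun fun k => by simp only [F]; ring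
  have hshift : ∀ k, F (k + 1) = a * ((k.descFactorial r : ℝ) * π k) := by
    intro k
    have hbal := h.balance k
    rw [deathRate_succ] at hbal
    simp only [F, Nat.succ_descFactorial_succ]
    push_cast
    rw [cast_descFactorial_succ]
    linear_combination (-(k.descFactorial r : ℝ)) * hbal
  have hF' := (hasSum_nat_add_iff' 1).mpr hF
  simp only [Finset.sum_range_one, F, Nat.zero_descFactorial_succ, Nat.cast_zero, hshift] at hF'
  exact ((h.hasSum_factorialMoment r).mul_left a).unique (by simpa using hF')

lemma IsPBD.sq_factorialMoment_one_le (h : IsPBD a b π) :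
    factorialMoment π 1 ^ 2 ≤ factorialMoment π 2 + factorialMoment π 1 := by
  set μ := factorialMoment π 1
  have hvar := (((h.hasSum_factorialMoment 2).add (h.hasSum_factorialMoment 1)).sub
    ((h.hasSum_factorialMoment 1).mul_left (2 * μ))).add
    ((h.hasSum_factorialMoment 0).mul_left (μ ^ 2))
  have := hvar.nonneg fun k => by
    simp only [Nat.cast_descFactorial_two, Nat.descFactorial_one, Nat.descFactorial_zero,
      Nat.cast_one]
    nlinarith [mul_nonneg (sq_nonneg ((k : ℝ) - μ)) (h.pos k).le]
  rw [h.factorialMoment_zero] at this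
  nlinarith

lemma IsPBD.mul_factorialMoment_one_le (h : IsPBD a b π) {θ : ℝ} (hθ : 0 < θ)
    (hθb : θ ^ 2 + (b - 1) * θ = a * b) : θ * factorialMoment π 1 ≤ a := by
  have hmean := h.factorialMoment_recurrence 0
  rw [h.factorialMoment_zero] at hmean
  have hvar := h.sq_factorialMoment_one_le
  have hμ := h.factorialMoment_nonneg 1
  have hb := h.b_pos
  push_cast at hmean
  rcases le_or_gt θ (b * factorialMoment π 1 + 1 - b) with hle | hlt
  · nlinarith [mul_le_mul_of_nonneg_right hle hμ]
  · nlinarith [mul_lt_mul_of_pos_left hlt hθ]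

lemma IsPBD.factorialMoment_one_mul_le (h : IsPBD a b π) :
    factorialMoment π 1 * (1 + 2 * a * b / (a + 2 * b + 2)) ≤ a := by
  have h0 := h.factorialMoment_recurrence 0
  have h1 := h.factorialMoment_recurrence 1
  have h2 := h.factorialMoment_recurrence 2
  rw [h.factorialMoment_zero] at h0
  push_cast at h0 h1 h2
  have hm3 := h.factorialMoment_nonneg 3
  have hm4 := h.factorialMoment_nonneg 4
  have ha := h.a_pos
  have hb := h.b_pos
  have hS : 0 < a + 2 * b + 2 := by linarith
  have key : 2 * a * factorialMoment π 1 ≤ (a + 2 * b + 2) * factorialMoment π 2 := by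
    nlinarith [mul_le_mul_of_nonneg_left hm3 hb.le]
  have hD : 1 + 2 * a * b / (a + 2 * b + 2) = (a + 2 * b + 2 + 2 * a * b) / (a + 2 * b + 2) := by
    field_simp
  rw [hD, mul_div_assoc', div_le_iff₀ hS]
  nlinarith [mul_le_mul_of_nonneg_left key hb.le]

lemma sum_sub_tsum_mul_eq (hπ : HasSum π 1) (hf : Summable fun k => f k * π k) (n : ℕ) :
    ∑ k ∈ range (n + 1), (f k - ∑' j, f j * π j) * π k =
      (1 - ∑ k ∈ range (n + 1), π k) * ∑ k ∈ range (n + 1), (f k - f n) * π k -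
        (∑ k ∈ range (n + 1), π k) * ∑' i, (f (i + (n + 1)) - f n) * π (i + (n + 1)) := by
  have hmass := hπ.summable.sum_add_tsum_nat_add (n + 1)
  rw [hπ.tsum_eq] at hmass
  have hsplit := hf.sum_add_tsum_nat_add (n + 1)
  have htail : ∑' i, (f (i + (n + 1)) - f n) * π (i + (n + 1)) =
      ∑' i, f (i + (n + 1)) * π (i + (n + 1)) - f n * ∑' i, π (i + (n + 1)) := by
    rw [← tsum_mul_left, ← Summable.tsum_sub ((summable_nat_add_iff (n + 1)).mpr hf)
      (((summable_nat_add_iff (n + 1)).mpr hπ.summable).mul_left _)]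
    exact tsum_congr fun i => by ring
  rw [htail, ← hsplit]
  simp only [sub_mul, sum_sub_distrib, ← mul_sum]
  linear_combination (-(f n * ∑ k ∈ range (n + 1), π k)) * hmass

lemma abs_sum_sub_tsum_mul_le (hπ : HasSum π 1) (hπ0 : ∀ k, 0 ≤ π k)
    (hμ : Summable fun k : ℕ => (k : ℝ) * π k)
    (hf : ∀ x y : ℕ, |f x - f y| ≤ |(x : ℝ) - (y : ℝ)|) (hfs : Summable fun k => f k * π k)
    (n : ℕ) :
    |∑ k ∈ range (n + 1), (f k - ∑' j, f j * π j) * π k| ≤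
      ∑ k ∈ range (n + 1), (-(k : ℝ) - ∑' j : ℕ, -(j : ℝ) * π j) * π k := by
  -- the right side is the left side for `f = -id`, where each estimate below is an equality
  have hid : Summable fun k : ℕ => -(k : ℝ) * π k := by simpa only [neg_mul] using hμ.neg
  rw [sum_sub_tsum_mul_eq hπ hfs, sum_sub_tsum_mul_eq hπ hid]
  set P := ∑ k ∈ range (n + 1), π k
  have hP : P ≤ 1 := by
    have := hπ.summable.sum_add_tsum_nat_add (n + 1)
    rw [hπ.tsum_eq] at this
    linarith [(tsum_nonneg fun i => hπ0 (i + (n + 1)) : 0 ≤ ∑' i, π (i + (n + 1)))]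
  have hP0 : 0 ≤ P := sum_nonneg fun k _ => hπ0 k
  have hhead : |∑ k ∈ range (n + 1), (f k - f n) * π k| ≤
      ∑ k ∈ range (n + 1), (-(k : ℝ) - -(n : ℝ)) * π k := by
    refine (abs_sum_le_sum_abs _ _).trans (sum_le_sum fun k hk => ?_)
    have hkn : (k : ℝ) ≤ n := by exact_mod_cast Nat.lt_succ_iff.mp (mem_range.mp hk)
    rw [abs_mul, abs_of_nonneg (hπ0 k)]
    refine mul_le_mul_of_nonneg_right ((hf k n).trans_eq ?_) (hπ0 k)
    rw [abs_of_nonpos (by linarith)]; ring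
  have htail : |∑' i, (f (i + (n + 1)) - f n) * π (i + (n + 1))| ≤
      -∑' i, (-((i + (n + 1) : ℕ) : ℝ) - -(n : ℝ)) * π (i + (n + 1)) := by
    have hs := ((summable_nat_add_iff (n + 1)).mpr hid).sub
      (((summable_nat_add_iff (n + 1)).mpr hπ.summable).mul_left (-(n : ℝ)))
    have hfs' := ((summable_nat_add_iff (n + 1)).mpr hfs).sub
      (((summable_nat_add_iff (n + 1)).mpr hπ.summable).mul_left (f n))
    have hpt : ∀ i, |(f (i + (n + 1)) - f n) * π (i + (n + 1))| ≤
        -((-((i + (n + 1) : ℕ) : ℝ) - -(n : ℝ)) * π (i + (n + 1))) := by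
      intro i
      rw [abs_mul, abs_of_nonneg (hπ0 _), ← neg_mul]
      refine mul_le_mul_of_nonneg_right ((hf _ n).trans_eq ?_) (hπ0 _)
      rw [abs_of_nonneg (by push_cast; linarith)]; ring
    have hfs'' : Summable fun i => (f (i + (n + 1)) - f n) * π (i + (n + 1)) :=
      hfs'.congr fun i => by ring
    calc |∑' i, (f (i + (n + 1)) - f n) * π (i + (n + 1))|
        ≤ ∑' i, |(f (i + (n + 1)) - f n) * π (i + (n + 1))| := by
          simpa only [Real.norm_eq_abs] using norm_tsum_le_tsum_norm hfs''.norm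
      _ ≤ ∑' i, -((-((i + (n + 1) : ℕ) : ℝ) - -(n : ℝ)) * π (i + (n + 1))) :=
          hfs''.abs.tsum_le_tsum hpt (hs.neg.congr fun i => by ring)
      _ = _ := tsum_neg
  calc _ ≤ |(1 - P) * ∑ k ∈ range (n + 1), (f k - f n) * π k| +
        |P * ∑' i, (f (i + (n + 1)) - f n) * π (i + (n + 1))| := abs_sub _ _
    _ = (1 - P) * |∑ k ∈ range (n + 1), (f k - f n) * π k| +
        P * |∑' i, (f (i + (n + 1)) - f n) * π (i + (n + 1))| := by
      rw [abs_mul, abs_mul, abs_of_nonneg (by linarith), abs_of_nonneg hP0]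
    _ ≤ _ := by
      nlinarith [mul_le_mul_of_nonneg_left hhead (by linarith : 0 ≤ 1 - P),
        mul_le_mul_of_nonneg_left htail hP0]

-- `steinSolution a π f n` is `g̃_f (n + 1)`.
def steinSolution (a : ℝ) (π f : ℕ → ℝ) (n : ℕ) : ℝ :=
  (∑ k ∈ range (n + 1), (f k - ∑' j, f j * π j) * π k) / (a * π n)

lemma IsPBD.steinSolution_zero (h : IsPBD a b π) (f : ℕ → ℝ) :
    steinSolution a π f 0 = (f 0 - ∑' j, f j * π j) / a := by
  rw [steinSolution, sum_range_one, mul_div_mul_right _ _ (h.pos 0).ne']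

lemma IsPBD.steinSolution_succ (h : IsPBD a b π) (f : ℕ → ℝ) (n : ℕ) :
    a * steinSolution a π f (n + 1) =
      deathRate b (n + 1) * steinSolution a π f n + (f (n + 1) - ∑' j, f j * π j) := by
  have hp := h.pos (n + 1)
  have hd := deathRate_succ_pos h.b_pos.le n
  have ha := h.a_pos
  simp only [steinSolution, sum_range_succ _ (n + 1), h.balance n]
  field_simp

lemma IsPBD.eq_steinSolution (h : IsPBD a b π) {g : ℕ → ℝ}
    (hg : ∀ n, a * g (n + 1) - deathRate b n * g n = f n - ∑' k, f k * π k) (n : ℕ) :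
    g (n + 1) = steinSolution a π f n := by
  induction n with
  | zero =>
    have := hg 0
    rw [deathRate_zero, zero_mul, sub_zero] at this
    rw [h.steinSolution_zero, ← this, mul_div_cancel_left₀ _ h.a_pos.ne']
  | succ n ih =>
    refine mul_left_cancel₀ h.a_pos.ne' ?_
    rw [h.steinSolution_succ, ← ih]
    linear_combination hg (n + 1)

lemma IsPBD.abs_steinSolution_le (h : IsPBD a b π)
    (hf : ∀ x y : ℕ, |f x - f y| ≤ |(x : ℝ) - (y : ℝ)|) (hfs : Summable fun k => f k * π k)
    (n : ℕ) : |steinSolution a π f n| ≤ steinSolution a π (fun k => -(k : ℝ)) n := by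
  rw [steinSolution, steinSolution, abs_div, abs_of_pos (mul_pos h.a_pos (h.pos n))]
  exact div_le_div_of_nonneg_right
    (abs_sum_sub_tsum_mul_le h.hasSum (fun k => (h.pos k).le) h.summable_cast_mul hf hfs n)
    (mul_pos h.a_pos (h.pos n)).le

section Extremal

-- `G n = ∑_{k ≤ n} (μ - k) π_k / (a π_n)`, with `μ = factorialMoment π 1`.
local notation "G" => steinSolution a π fun k : ℕ => -(k : ℝ)

lemma tsum_neg_mul_eq : ∑' j : ℕ, -(j : ℝ) * π j = -factorialMoment π 1 := by
  simp [factorialMoment_one, neg_mul, tsum_neg]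

lemma IsPBD.steinSolution_neg_zero (h : IsPBD a b π) : G 0 = factorialMoment π 1 / a := by
  rw [h.steinSolution_zero, tsum_neg_mul_eq]; simp

lemma IsPBD.steinSolution_neg_succ (h : IsPBD a b π) (n : ℕ) :
    a * G (n + 1) = deathRate b (n + 1) * G n + factorialMoment π 1 - (n + 1) := by
  rw [h.steinSolution_succ, tsum_neg_mul_eq]; push_cast; ring

lemma IsPBD.steinSolution_neg_lt_succ (h : IsPBD a b π) {i : ℕ} (hi : G i ≤ G (i + 1))
    (hgap : 1 < (1 + 2 * b * (i + 1)) * G (i + 1)) : G (i + 1) < G (i + 2) := by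
  have hi1 := h.steinSolution_neg_succ i
  have hi2 := h.steinSolution_neg_succ (i + 1)
  have hd : deathRate b (i + 1 + 1) = deathRate b (i + 1) + (1 + 2 * b * (i + 1)) := by
    simp only [deathRate_succ]; push_cast; ring
  rw [hd] at hi2
  push_cast at hi2
  have := mul_le_mul_of_nonneg_left hi (deathRate_succ_pos h.b_pos.le i).le
  exact lt_of_mul_lt_mul_left (by linarith) h.a_pos.le

lemma IsPBD.mul_steinSolution_neg_succ_le_one (h : IsPBD a b π) {θ : ℝ} (hθ : 0 < θ)
    (hθb : θ ^ 2 + (b - 1) * θ = a * b) {i : ℕ} (hi : G i ≤ G (i + 1))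
    (hθi : 1 + b * i < θ) : θ * G (i + 1) ≤ 1 := by
  have hb := h.b_pos
  have hrec := h.steinSolution_neg_succ i
  have hmean := h.mul_factorialMoment_one_le hθ hθb
  have hd := deathRate_succ (b := b) i
  have hdθ : deathRate b (i + 1) < (i + 1) * θ := by
    rw [hd]; exact mul_lt_mul_of_pos_left hθi (by positivity)
  have hda : deathRate b (i + 1) < a := by
    refine lt_of_mul_lt_mul_left ?_ hb.le
    nlinarith [mul_lt_mul_of_pos_left hdθ hb]
  have := mul_le_mul_of_nonneg_left hi (deathRate_succ_pos hb.le i).le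
  have hkey : (a - deathRate b (i + 1)) * (θ * G (i + 1)) ≤ (a - deathRate b (i + 1)) * 1 := by
    nlinarith
  exact le_of_mul_le_mul_left hkey (by linarith)

-- For `j > n`, `(1 + b n) j π_j ≤ λ_j π_j = a π_{j-1}`.
lemma IsPBD.mul_tsum_tail_le (h : IsPBD a b π) {n : ℕ} (hn : 2 * a ≤ n + 1) :
    (1 + b * n) * ∑' i : ℕ, ((i + (n + 1) : ℕ) : ℝ) * π (i + (n + 1)) ≤ 2 * a * π n := by
  have hπs := h.hasSum.summable
  have hB : Summable fun i : ℕ => ((i + (n + 1) : ℕ) : ℝ) * π (i + (n + 1)) :=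
    (summable_nat_add_iff (f := fun k : ℕ => (k : ℝ) * π k) (n + 1)).mpr h.summable_cast_mul
  set B := ∑' i : ℕ, ((i + (n + 1) : ℕ) : ℝ) * π (i + (n + 1))
  set Q := ∑' i : ℕ, π (i + (n + 1))
  have hshift : ∑' i, π (i + n) = π n + Q := by
    rw [((summable_nat_add_iff n).mpr hπs).tsum_eq_zero_add, zero_add]
    exact congrArg _ (tsum_congr fun i => by rw [add_right_comm, add_assoc])
  have hBQ : (1 + b * n) * B ≤ a * (π n + Q) := by
    rw [← tsum_mul_left, ← hshift, ← tsum_mul_left]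
    refine (hB.mul_left _).tsum_le_tsum (fun i => ?_)
      (((summable_nat_add_iff n).mpr hπs).mul_left a)
    have hbal := h.balance (i + n)
    rw [deathRate_succ, add_assoc] at hbal
    rw [hbal]
    push_cast
    have := h.pos (i + (n + 1))
    nlinarith [mul_nonneg (mul_nonneg h.b_pos.le (Nat.cast_nonneg (α := ℝ) i)) this.le,
      mul_nonneg (mul_nonneg (mul_nonneg h.b_pos.le (Nat.cast_nonneg (α := ℝ) i))
        (Nat.cast_nonneg (α := ℝ) (i + n))) this.le]
  have hQB : (n + 1) * Q ≤ B := by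
    rw [← tsum_mul_left]
    refine ((((summable_nat_add_iff (n + 1)).mpr hπs)).mul_left _).tsum_le_tsum (fun i => ?_)
      hB
    exact mul_le_mul_of_nonneg_right (by push_cast; linarith [Nat.cast_nonneg (α := ℝ) i])
      (h.pos _).le
  have hB0 : 0 ≤ B := tsum_nonneg fun i => mul_nonneg (Nat.cast_nonneg _) (h.pos _).le
  have hQ : 0 ≤ Q := tsum_nonneg fun i => (h.pos _).le
  nlinarith [mul_nonneg h.b_pos.le (Nat.cast_nonneg (α := ℝ) n), mul_le_mul_of_nonneg_right hn hQ]

lemma IsPBD.steinSolution_neg_le (h : IsPBD a b π) {n : ℕ} (hn : 2 * a ≤ n + 1) :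
    G n ≤ 2 / (1 + b * n) := by
  have hmass := h.hasSum.summable.sum_add_tsum_nat_add (n + 1)
  have hmean := h.summable_cast_mul.sum_add_tsum_nat_add (n + 1)
  rw [h.hasSum.tsum_eq] at hmass
  rw [← factorialMoment_one] at hmean
  have hQ : 0 ≤ ∑' i : ℕ, π (i + (n + 1)) := tsum_nonneg fun i => (h.pos _).le
  have hT : ∑ k ∈ range (n + 1), (-(k : ℝ) - ∑' j : ℕ, -(j : ℝ) * π j) * π k ≤
      ∑' i : ℕ, ((i + (n + 1) : ℕ) : ℝ) * π (i + (n + 1)) := by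
    rw [tsum_neg_mul_eq]
    simp only [sub_neg_eq_add, add_mul, neg_mul, sum_add_distrib, sum_neg_distrib, ← mul_sum]
    have := congrArg (factorialMoment π 1 * ·) hmass
    linarith [mul_nonneg (h.factorialMoment_nonneg 1) hQ]
  have hd : 0 < 1 + b * n := by have := h.b_pos; positivity
  rw [steinSolution, div_le_div_iff₀ (mul_pos h.a_pos (h.pos n)) hd]
  nlinarith [h.mul_tsum_tail_le hn]

lemma IsPBD.eventually_steinSolution_neg_lt (h : IsPBD a b π) {c : ℝ} (hc : 0 < c) :
    ∀ᶠ n in atTop, G n < c := by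
  filter_upwards [eventually_ge_atTop ⌈2 * a⌉₊, eventually_gt_atTop ⌈2 / (b * c)⌉₊]
    with n han hbn
  have han' : 2 * a ≤ n + 1 := by linarith [Nat.ceil_le.mp han]
  have hbn' : 2 < c * (b * n) := by
    have := Nat.lt_of_ceil_lt hbn
    rw [div_lt_iff₀ (mul_pos h.b_pos hc)] at this
    linarith
  refine (h.steinSolution_neg_le han').trans_lt ?_
  rw [div_lt_iff₀ (by have := h.b_pos; positivity)]
  nlinarith

lemma IsPBD.steinSolution_neg_le_of_step (h : IsPBD a b π) {c : ℝ} (hc : 0 < c)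
    (hc0 : factorialMoment π 1 ≤ a * c)
    (hstep : ∀ i : ℕ, G i ≤ G (i + 1) → c < G (i + 1) → 1 < (1 + 2 * b * (i + 1)) * G (i + 1))
    (n : ℕ) : G n ≤ c := by
  have hrise : ∀ i, G i ≤ G (i + 1) → G (i + 1) ≤ c := by
    intro i hi
    by_contra! hci
    -- past a rising step above `c`, `G` keeps rising, which its decay forbids
    have hinc : ∀ k, G (i + k) ≤ G (i + k + 1) ∧ c < G (i + k + 1) := by
      intro k
      induction k with
      | zero => exact ⟨hi, hci⟩
      | succ k ih =>
        have := h.steinSolution_neg_lt_succ ih.1 (hstep _ ih.1 ih.2)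
        exact ⟨this.le, ih.2.trans this⟩
    obtain ⟨m, hm, him⟩ :=
      ((h.eventually_steinSolution_neg_lt hc).and (eventually_ge_atTop (i + 1))).exists
    obtain ⟨k, rfl⟩ := Nat.exists_eq_add_of_le him
    exact (hinc k).2.not_gt (by rwa [add_right_comm] at hm)
  induction n with
  | zero => rw [h.steinSolution_neg_zero, div_le_iff₀ h.a_pos]; linarith
  | succ n ih => exact (le_or_gt (G n) (G (n + 1))).elim (hrise n) fun hlt => hlt.le.trans ih

lemma IsPBD.steinSolution_neg_le_one_div (h : IsPBD a b π) (n : ℕ) :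
    G n ≤ 1 / (1 + 2 * a * b / (a + 2 * b + 2)) := by
  have ha := h.a_pos
  have hb := h.b_pos
  have hS : 0 < a + 2 * b + 2 := by linarith
  have hD : 0 < 1 + 2 * a * b / (a + 2 * b + 2) := by positivity
  have hcb : 1 + 2 * a * b / (a + 2 * b + 2) ≤ 1 + 2 * b := by
    rw [mul_right_comm, mul_div_assoc]
    nlinarith [(div_le_one hS).mpr (by linarith : a ≤ a + 2 * b + 2)]
  refine h.steinSolution_neg_le_of_step (by positivity) ?_ (fun i _ hci => ?_) n
  · rw [mul_one_div, le_div_iff₀ hD]; exact h.factorialMoment_one_mul_le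
  · rw [div_lt_iff₀ hD] at hci
    have hG : 0 < G (i + 1) := pos_of_mul_pos_left (one_pos.trans hci) hD.le
    have hi : (0 : ℝ) ≤ i := Nat.cast_nonneg i
    nlinarith [mul_le_mul_of_nonneg_left hcb hG.le, mul_nonneg (mul_nonneg hb.le hi) hG.le]

lemma IsPBD.steinSolution_neg_le_inv (h : IsPBD a b π) {θ : ℝ} (hθ : 0 < θ)
    (hθb : θ ^ 2 + (b - 1) * θ = a * b) (n : ℕ) : G n ≤ 1 / θ := by
  refine h.steinSolution_neg_le_of_step (by positivity) ?_ (fun i hi hci => ?_) n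
  · rw [mul_one_div, le_div_iff₀ hθ, mul_comm]; exact h.mul_factorialMoment_one_le hθ hθb
  · rw [div_lt_iff₀ hθ] at hci
    rcases le_or_gt θ (1 + 2 * b * (i + 1)) with hθi | hθi
    · nlinarith
    · have := h.mul_steinSolution_neg_succ_le_one hθ hθb hi (by nlinarith [h.b_pos])
      linarith

end Extremal

end PBD

end

/-- bound on `|g̃_f n|` for the PBD(a;0,1,b) Stein solution. -/
theorem stmt_4
    (a b : ℝ) (ha : 0 < a) (hb : 0 < b)
    (C : ℝ) (hC : 0 < C) (π : ℕ → ℝ)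
    (hπ : ∀ n : ℕ, π n =
      C * a ^ n / ∏ i ∈ Finset.range n, (((i : ℝ) + 1) + b * ((i : ℝ) + 1) * (i : ℝ)))
    (hπ1 : ∑' n, π n = 1)
    (f : ℕ → ℝ) (hf : ∀ x y : ℕ, |f x - f y| ≤ |(x : ℝ) - (y : ℝ)|)
    (hfs : Summable fun n => |f n| * π n)
    (g : ℕ → ℝ) (hg0 : g 0 = g 1)
    (hg : ∀ n : ℕ, a * g (n + 1) - ((n : ℝ) + b * (n : ℝ) * ((n : ℝ) - 1)) * g n
      = f n - ∑' k, f k * π k)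
    :
    ∀ n : ℕ, |g n| ≤
      min (1 / (1 + 2 * a * b / (a + 2 * b + 2)))
        ((Real.sqrt (a * b + (b - 1) ^ 2 / 4) + (b - 1) / 2) / (a * b)) := by
  have h : PBD.IsPBD a b π := PBD.isPBD_of_eq_prod ha hb hC
    (fun n => by
      rw [hπ n]; simp only [PBD.deathRate_succ]; congr 1; exact prod_congr rfl fun i _ => by ring)
    hπ1
  have hfπ : Summable fun k => f k * π k :=
    .of_abs (hfs.congr fun k => by rw [abs_mul, abs_of_pos (h.pos k)])
  set s := Real.sqrt (a * b + (b - 1) ^ 2 / 4)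
  have hs : s ^ 2 = a * b + (b - 1) ^ 2 / 4 := Real.sq_sqrt (by positivity)
  have hθ : 0 < s - (b - 1) / 2 := by
    nlinarith [mul_pos ha hb, Real.sqrt_nonneg (a * b + (b - 1) ^ 2 / 4)]
  have hθb : (s - (b - 1) / 2) ^ 2 + (b - 1) * (s - (b - 1) / 2) = a * b := by
    linear_combination hs
  have hinv : (s + (b - 1) / 2) / (a * b) = 1 / (s - (b - 1) / 2) := by
    rw [div_eq_div_iff (by positivity) hθ.ne']; linear_combination hs
  have hbound : ∀ n, |g (n + 1)| ≤
      min (1 / (1 + 2 * a * b / (a + 2 * b + 2))) (1 / (s - (b - 1) / 2)) :=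
    fun n => (h.eq_steinSolution hg n ▸ h.abs_steinSolution_le hf hfπ n).trans
      (le_min (h.steinSolution_neg_le_one_div n) (h.steinSolution_neg_le_inv hθ hθb n))
  rw [hinv]
  rintro (_ | n)
  · rw [hg0]; exact hbound 0
  · exact hbound n
end

section
/- The Stein solution for f₁ is positive and decreasing on i ≥ 1: for every i ≥ 1, g_{f₁}(i) > 0 and g_{f₁}(i+1) ≤ g_{f₁}(i). -/
/-!
With death rates `a n = β n + n (n - 1)`, the weights satisfy the balance equation
`α π n = a (n + 1) π (n + 1)`, and telescoping the Stein equation `α g (n + 1) = a n g n + (m - n)`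
(`m` the mean) against it gives `α π n g (n + 1) = ∑_{k ≤ n} (m - k) π k`. These centred partial
sums are positive and tend to `0`, so `g (n + 1) > 0` and `α π n g (n + 1) → 0`.

Eliminating `g` between two consecutive Stein equations gives
`(a n - α) α (g (n + 2) - g (n + 1)) = a n (a (n + 1) - α) (g (n + 1) - g n) + q n`, where
`q n = n (n + 1) + α - m (β + 2 n)` is `E[(X - n)(X - n - 1)] ≥ 0`. While `a n ≤ α` this carries
`g (n + 1) ≤ g n` upwards from `g 0 = g 1`. Once `a n > α`, an increase at `n` would make
`π k (g (k + 1) - g k)` nondecreasing and positive for `k ≥ n`, which contradicts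
`α π k g (k + 1) → 0`.
-/

open Finset Filter Topology

namespace PolynomialBirthDeath

def deathRate (β : ℝ) (n : ℕ) : ℝ := β * n + n * (n - 1)

variable {α β m : ℝ} {π g : ℕ → ℝ}

@[simp] lemma deathRate_zero : deathRate β 0 = 0 := by simp [deathRate]

lemma deathRate_succ_sub (n : ℕ) : deathRate β (n + 1) - deathRate β n = β + 2 * n := by
  simp only [deathRate]; push_cast; ring

lemma mul_natCast_le_deathRate (n : ℕ) : β * n ≤ deathRate β n := by
  rcases n.eq_zero_or_pos with rfl | hn
  · simp
  · have : (1 : ℝ) ≤ n := by exact_mod_cast hn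
    simp only [deathRate]; nlinarith

lemma deathRate_nonneg (hβ : 0 ≤ β) (n : ℕ) : 0 ≤ deathRate β n :=
  (mul_nonneg hβ n.cast_nonneg).trans (mul_natCast_le_deathRate n)

lemma deathRate_strictMono (hβ : 0 < β) : StrictMono (deathRate β) :=
  strictMono_nat_of_lt_succ fun n => by
    linarith [deathRate_succ_sub (β := β) n, (n.cast_nonneg : (0 : ℝ) ≤ n)]

lemma deathRate_succ_pos (hβ : 0 < β) (n : ℕ) : 0 < deathRate β (n + 1) :=
  deathRate_zero (β := β) ▸ deathRate_strictMono hβ n.succ_pos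

lemma natCast_sub_mul_natCast_sub_sub_one_nonneg (k n : ℕ) :
    0 ≤ ((k : ℝ) - n) * (k - n - 1) := by
  rcases le_or_gt k n with h | h
  · have : (k : ℝ) ≤ n := by exact_mod_cast h
    nlinarith
  · have : (n : ℝ) + 1 ≤ k := by exact_mod_cast h
    nlinarith

lemma pos_of_eq_div_prod {C : ℝ} (hC : 0 < C) (hα : 0 < α) (hβ : 0 < β)
    (hπ : ∀ n, π n = C * α ^ n / ∏ i ∈ range n, deathRate β (i + 1)) (n : ℕ) : 0 < π n := by
  rw [hπ]
  exact div_pos (by positivity) (prod_pos fun i _ => deathRate_succ_pos hβ i)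

lemma balance_of_eq_div_prod {C : ℝ} (hβ : 0 < β)
    (hπ : ∀ n, π n = C * α ^ n / ∏ i ∈ range n, deathRate β (i + 1)) (n : ℕ) :
    α * π n = deathRate β (n + 1) * π (n + 1) := by
  have hprod := (prod_pos fun i (_ : i ∈ range n) => deathRate_succ_pos hβ i).ne'
  rw [hπ, hπ, prod_range_succ]
  field_simp [hprod, (deathRate_succ_pos hβ n).ne']
  ring

lemma hasSum_deathRate_mul (hπ : HasSum π 1)
    (hbal : ∀ n, α * π n = deathRate β (n + 1) * π (n + 1)) :
    HasSum (fun k => deathRate β k * π k) α := by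
  rw [← hasSum_nat_add_iff' 1]
  simpa [← hbal] using hπ.mul_left α

lemma summable_natCast_mul (hβ : 0 < β) (hπ : ∀ k, 0 ≤ π k)
    (h : Summable fun k => deathRate β k * π k) : Summable fun k : ℕ => (k : ℝ) * π k := by
  refine (h.div_const β).of_nonneg_of_le (fun k => mul_nonneg k.cast_nonneg (hπ k)) fun k => ?_
  rw [le_div_iff₀ hβ]
  nlinarith [mul_le_mul_of_nonneg_right (mul_natCast_le_deathRate (β := β) k) (hπ k)]

lemma mean_mul_le (hπ0 : ∀ k, 0 ≤ π k) (hπ : HasSum π 1)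
    (hm : HasSum (fun k : ℕ => (k : ℝ) * π k) m) (ha : HasSum (fun k => deathRate β k * π k) α)
    (n : ℕ) : m * (β + 2 * n) ≤ n * (n + 1) + α := by
  have hsum := (ha.sub (hm.mul_left (β + 2 * n))).add (hπ.mul_left ((n : ℝ) * (n + 1)))
  have hexpand : ∀ k : ℕ, deathRate β k * π k - (β + 2 * n) * (k * π k) + n * (n + 1) * π k
      = ((k : ℝ) - n) * (k - n - 1) * π k := fun k => by simp only [deathRate]; ring
  simp only [hexpand, mul_one] at hsum
  have := hsum.nonneg fun k => mul_nonneg (natCast_sub_mul_natCast_sub_sub_one_nonneg k n) (hπ0 k)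
  linarith

lemma mul_mul_succ_eq_sum_range {a f : ℕ → ℝ} (ha0 : a 0 = 0)
    (hbal : ∀ n, α * π n = a (n + 1) * π (n + 1))
    (hg : ∀ n, α * g (n + 1) = a n * g n + f n) (n : ℕ) :
    α * π n * g (n + 1) = ∑ k ∈ range (n + 1), f k * π k := by
  induction n with
  | zero => simp only [zero_add, sum_range_one]; linear_combination π 0 * hg 0 + g 0 * π 0 * ha0
  | succ n ih =>
    rw [sum_range_succ, ← ih]
    linear_combination π (n + 1) * hg (n + 1) - g (n + 1) * hbal n

lemma sum_range_sub_mul_pos (hπ : ∀ k, 0 < π k) (h : HasSum (fun k => (m - k) * π k) 0)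
    (n : ℕ) : 0 < ∑ k ∈ range (n + 1), (m - k) * π k := by
  by_cases hn : (n : ℝ) < m
  · refine sum_pos (fun k hk => mul_pos ?_ (hπ k)) nonempty_range_add_one
    have : (k : ℝ) ≤ n := by exact_mod_cast Nat.lt_succ_iff.mp (mem_range.mp hk)
    linarith
  · have htail := (hasSum_nat_add_iff' (n + 1)).mpr h
    have hneg : ∀ j : ℕ, (m - ↑(j + (n + 1))) * π (j + (n + 1)) < 0 := fun j => by
      refine mul_neg_of_neg_of_pos ?_ (hπ _)
      push_cast
      linarith [(j.cast_nonneg : (0 : ℝ) ≤ j)]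
    have := hasSum_lt (fun j => (hneg j).le) (hneg 0) htail hasSum_zero
    linarith

lemma stein_sub_identity (hg : ∀ n : ℕ, α * g (n + 1) = deathRate β n * g n + (m - n)) (n : ℕ) :
    (deathRate β n - α) * (α * (g (n + 2) - g (n + 1))) =
      deathRate β n * (deathRate β (n + 1) - α) * (g (n + 1) - g n) +
        (n * (n + 1) + α - m * (β + 2 * n)) := by
  have h1 := hg n
  have h2 := hg (n + 1)
  have hd := deathRate_succ_sub (β := β) n
  have ha : deathRate β n = β * n + n * (n - 1) := rfl
  push_cast at h2
  linear_combination (deathRate β n - α) * h2 - (deathRate β (n + 1) - α) * h1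
    - (m - n) * hd - ha

lemma stein_succ_le_of_deathRate_le (hα : 0 < α) (hβ : 0 < β)
    (hg : ∀ n : ℕ, α * g (n + 1) = deathRate β n * g n + (m - n))
    (hmean : ∀ n : ℕ, m * (β + 2 * n) ≤ n * (n + 1) + α) (hg0 : g 0 = g 1) (n : ℕ)
    (hn : deathRate β n ≤ α) : g (n + 1) ≤ g n := by
  induction n with
  | zero => exact hg0.ge
  | succ n ih =>
    have hlt : deathRate β n < α := (deathRate_strictMono hβ n.lt_succ_self).trans_le hn
    have hprev : 0 ≤ deathRate β n * (deathRate β (n + 1) - α) * (g (n + 1) - g n) :=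
      mul_nonneg_of_nonpos_of_nonpos
        (mul_nonpos_of_nonneg_of_nonpos (deathRate_nonneg hβ.le n) (sub_nonpos.2 hn))
        (sub_nonpos.2 (ih hlt.le))
    have hid := stein_sub_identity hg n
    have hdiff : α * (g (n + 2) - g (n + 1)) ≤ 0 :=
      nonpos_of_mul_nonneg_right (by linarith [hmean n]) (sub_neg.2 hlt)
    exact sub_nonpos.1 (nonpos_of_mul_nonpos_right hdiff hα)

lemma increment_le_increment_succ (hα : 0 < α) (hβ : 0 < β)
    (hg : ∀ n : ℕ, α * g (n + 1) = deathRate β n * g n + (m - n))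
    (hmean : ∀ n : ℕ, m * (β + 2 * n) ≤ n * (n + 1) + α)
    (hbal : ∀ n, α * π n = deathRate β (n + 1) * π (n + 1)) (hπ : ∀ k, 0 ≤ π k) {n : ℕ}
    (hn : α < deathRate β n) (hgn : g n ≤ g (n + 1)) :
    π n * (g (n + 1) - g n) ≤ π (n + 1) * (g (n + 2) - g (n + 1)) := by
  have key : α * (deathRate β n - α) *
      (π (n + 1) * (g (n + 2) - g (n + 1)) - π n * (g (n + 1) - g n)) =
      π (n + 1) * (α * (deathRate β (n + 1) - deathRate β n) * (g (n + 1) - g n) +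
        (n * (n + 1) + α - m * (β + 2 * n))) := by
    linear_combination π (n + 1) * stein_sub_identity hg n
      - (g (n + 1) - g n) * (deathRate β n - α) * hbal n
  have hrate_lt := deathRate_strictMono hβ n.lt_succ_self
  refine sub_nonneg.1 (nonneg_of_mul_nonneg_right (key ▸ ?_) (mul_pos hα (sub_pos.2 hn)))
  exact mul_nonneg (hπ _) (add_nonneg
    (mul_nonneg (mul_nonneg hα.le (sub_nonneg.2 hrate_lt.le)) (sub_nonneg.2 hgn))
    (by linarith [hmean n]))

lemma stein_succ_le_of_lt_deathRate (hα : 0 < α) (hβ : 0 < β)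
    (hg : ∀ n : ℕ, α * g (n + 1) = deathRate β n * g n + (m - n))
    (hmean : ∀ n : ℕ, m * (β + 2 * n) ≤ n * (n + 1) + α)
    (hbal : ∀ n, α * π n = deathRate β (n + 1) * π (n + 1)) (hπ : ∀ k, 0 < π k)
    (hgpos : ∀ n, 0 < g (n + 1)) (hlim : Tendsto (fun n => α * π n * g (n + 1)) atTop (𝓝 0))
    {n : ℕ} (hn : α < deathRate β n) : g (n + 1) ≤ g n := by
  by_contra! hinc
  set G : ℕ → ℝ := fun k => π k * (g (k + 1) - g k)
  have hGpos : 0 < G n := mul_pos (hπ n) (sub_pos.2 hinc)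
  have hGmono : ∀ j, G n ≤ G (n + j) := by
    intro j
    induction j with
    | zero => rfl
    | succ j ih =>
      have hj : α < deathRate β (n + j) :=
        hn.trans_le ((deathRate_strictMono hβ).monotone (n.le_add_right j))
      have hgj : g (n + j) ≤ g (n + j + 1) :=
        sub_nonneg.1 (nonneg_of_mul_nonneg_right (hGpos.trans_le ih).le (hπ _))
      exact ih.trans (increment_le_increment_succ hα hβ hg hmean hbal (fun k => (hπ k).le) hj hgj)
  obtain ⟨j, hj⟩ := (hlim.eventually_lt_const (mul_pos hα hGpos)).exists_forall_of_atTop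
  have hn0 : n + j ≠ 0 := by
    rintro h
    rw [Nat.eq_zero_of_add_eq_zero_right h, deathRate_zero] at hn
    exact hα.not_gt hn
  obtain ⟨k, hk⟩ := Nat.exists_eq_succ_of_ne_zero hn0
  have hgnj : 0 < π (n + j) * g (n + j) := mul_pos (hπ _) (hk ▸ hgpos k)
  have := hj (n + j) (j.le_add_left n)
  nlinarith [hGmono j]

end PolynomialBirthDeath

open PolynomialBirthDeath

/-- the Stein solution for `f₁ k = -k` is positive and decreasing on `i ≥ 1`. -/
theorem stmt_9
    (α β : ℝ) (hα : 0 < α) (hβ : 0 < β)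
    (C : ℝ) (hC : 0 < C) (π : ℕ → ℝ)
    (hπ : ∀ n : ℕ, π n =
      C * α ^ n / ∏ i ∈ Finset.range n, (β * ((i : ℝ) + 1) + ((i : ℝ) + 1) * (i : ℝ)))
    (hπ1 : ∑' n, π n = 1)
    (g₁ : ℕ → ℝ) (hg₁0 : g₁ 0 = g₁ 1)
    (hg₁ : ∀ n : ℕ, α * g₁ (n + 1) - (β * (n : ℝ) + (n : ℝ) * ((n : ℝ) - 1)) * g₁ n
      = -(n : ℝ) - ∑' k : ℕ, -(k : ℝ) * π k)
    :
    ∀ i : ℕ, 1 ≤ i → 0 < g₁ i ∧ g₁ (i + 1) ≤ g₁ i := by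
  have hrate (i : ℕ) : β * ((i : ℝ) + 1) + ((i : ℝ) + 1) * i = deathRate β (i + 1) := by
    simp only [deathRate]; push_cast; ring
  simp only [hrate] at hπ
  have hπpos := pos_of_eq_div_prod hC hα hβ hπ
  have hbal := balance_of_eq_div_prod hβ hπ
  have hπsum : HasSum π 1 := by
    by_cases h : Summable π
    · exact hπ1 ▸ h.hasSum
    · simp [tsum_eq_zero_of_not_summable h] at hπ1
  have hrates := hasSum_deathRate_mul hπsum hbal
  have hmean := (summable_natCast_mul hβ (fun k => (hπpos k).le) hrates.summable).hasSum
  set m := ∑' k : ℕ, (k : ℝ) * π k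
  have hrec (n : ℕ) : α * g₁ (n + 1) = deathRate β n * g₁ n + (m - n) := by
    have := hg₁ n
    simp only [neg_mul, tsum_neg] at this
    rw [deathRate]; linarith
  have hcentered : HasSum (fun k : ℕ => (m - k) * π k) 0 := by
    simpa [sub_mul] using (hπsum.mul_left m).sub hmean
  have hrep := mul_mul_succ_eq_sum_range deathRate_zero hbal hrec
  have hgpos (n : ℕ) : 0 < g₁ (n + 1) :=
    pos_of_mul_pos_right ((hrep n).symm ▸ sum_range_sub_mul_pos hπpos hcentered n)
      (mul_pos hα (hπpos n)).le
  have hlim : Tendsto (fun n => α * π n * g₁ (n + 1)) atTop (𝓝 0) := by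
    simpa only [hrep] using (tendsto_add_atTop_iff_nat 1).2 hcentered.tendsto_sum_nat
  have hmean_le := mean_mul_le (fun k => (hπpos k).le) hπsum hmean hrates
  have hanti (n : ℕ) : g₁ (n + 1) ≤ g₁ n := (le_or_gt (deathRate β n) α).elim
    (stein_succ_le_of_deathRate_le hα hβ hrec hmean_le hg₁0 n)
    (stein_succ_le_of_lt_deathRate hα hβ hrec hmean_le hbal hπpos hgpos hlim)
  intro i hi
  obtain ⟨n, rfl⟩ := Nat.exists_eq_add_of_le' hi
  exact ⟨hgpos n, hanti (n + 1)⟩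
end

section
/- The sequence e_i^+ := F(i)/(α π_i) is convex: for every i ≥ 0, e_{i+2}^+ − 2e_{i+1}^+ + e_i^+ ≥ 0; equivalently, F(i+2)/(α π_{i+2}) − 2F(i+1)/(α π_{i+1}) + F(i)/(α π_i) ≥ 0. -/
/-!
Write `s n = F n / π n`. The balance relation `μ (n+1) π (n+1) = α π n`, with death rates
`μ n = β n + n (n - 1)`, gives `s (n+1) = 1 + μ (n+1) s n / α` and hence
`α (s (n+2) - s (n+1)) = (μ (n+2) - μ (n+1)) s (n+1) + μ (n+1) (s (n+1) - s n)`.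
As `μ` is nonnegative, increasing and convex with `μ 0 = 0`, induction on this identity shows that
the increments of `s` are nonnegative and nondecreasing, i.e. `s` is convex.
-/

open Finset

/-- `F n / π n` for any `π` with `μ (n + 1) * π (n + 1) = α * π n`. -/
noncomputable def cdfPmfRatio (α : ℝ) (μ : ℕ → ℝ) : ℕ → ℝ
  | 0 => 1
  | n + 1 => 1 + μ (n + 1) * cdfPmfRatio α μ n / α

namespace cdfPmfRatio

variable {α : ℝ} {μ : ℕ → ℝ}

theorem eq_sum_div {π : ℕ → ℝ} (hα : α ≠ 0) (hπ : ∀ n, π n ≠ 0)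
    (hrec : ∀ n, μ (n + 1) * π (n + 1) = α * π n) (n : ℕ) :
    (∑ j ∈ range (n + 1), π j) / π n = cdfPmfRatio α μ n := by
  induction n with
  | zero => simp [cdfPmfRatio, hπ 0]
  | succ n ih =>
    rw [cdfPmfRatio, ← ih, sum_range_succ]
    have := hπ n
    have := hπ (n + 1)
    field_simp
    linear_combination (-∑ j ∈ range (n + 1), π j) * hrec n

theorem nonneg (hα : 0 ≤ α) (hμ : ∀ n, 0 ≤ μ n) (n : ℕ) : 0 ≤ cdfPmfRatio α μ n := by
  induction n with
  | zero => simp [cdfPmfRatio]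
  | succ n ih => have := hμ (n + 1); rw [cdfPmfRatio]; positivity

theorem mul_sub_succ (hα : α ≠ 0) (n : ℕ) :
    α * (cdfPmfRatio α μ (n + 2) - cdfPmfRatio α μ (n + 1)) =
      (μ (n + 2) - μ (n + 1)) * cdfPmfRatio α μ (n + 1) +
        μ (n + 1) * (cdfPmfRatio α μ (n + 1) - cdfPmfRatio α μ n) := by
  simp only [cdfPmfRatio]
  field_simp
  ring

theorem monotone_sub (hα : 0 < α) (hμ0 : μ 0 = 0) (hμ1 : 0 ≤ μ 1)
    (hμ : Monotone fun n => μ (n + 1) - μ n) :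
    Monotone fun n => cdfPmfRatio α μ (n + 1) - cdfPmfRatio α μ n := by
  set s := cdfPmfRatio α μ
  have hinc : ∀ n, 0 ≤ μ (n + 1) - μ n := fun n =>
    (show 0 ≤ μ (0 + 1) - μ 0 by simpa [hμ0] using hμ1).trans (hμ n.zero_le)
  have hmono : Monotone μ := monotone_nat_of_le_succ fun n => by linarith [hinc n]
  have hμnonneg : ∀ n, 0 ≤ μ n := fun n => hμ0 ▸ hmono n.zero_le
  have hs : ∀ n, 0 ≤ s n := nonneg hα.le hμnonneg
  suffices h : ∀ n, 0 ≤ s (n + 1) - s n ∧ s (n + 1) - s n ≤ s (n + 2) - s (n + 1) from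
    monotone_nat_of_le_succ fun n => (h n).2
  intro n
  induction n with
  | zero =>
    have hs0 : s 0 = 1 := rfl
    have hs1 : s 1 = 1 + μ 1 / α := by simp [s, cdfPmfRatio]
    have hΔ0 : s 1 - s 0 = μ 1 / α := by rw [hs1, hs0]; ring
    refine ⟨hΔ0 ▸ by positivity, le_of_mul_le_mul_left ?_ hα⟩
    rw [mul_sub_succ hα.ne', hΔ0, mul_div_cancel₀ _ hα.ne']
    have : μ 1 ≤ μ 2 - μ 1 := by simpa [hμ0] using hμ (zero_le_one' ℕ)
    have : 1 ≤ s 1 := by rw [hs1]; linarith [div_nonneg hμ1 hα.le]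
    nlinarith [mul_nonneg hμ1 (div_nonneg hμ1 hα.le)]
  | succ n ih =>
    obtain ⟨hΔ, hΔle⟩ := ih
    refine ⟨hΔ.trans hΔle, le_of_mul_le_mul_left ?_ hα⟩
    rw [mul_sub_succ hα.ne', mul_sub_succ hα.ne']
    gcongr ?_ * ?_ + ?_ * ?_
    · exact hs _
    · exact hinc _
    · exact hμ (n + 1).le_succ
    · linarith
    · exact hμnonneg _
    · exact hmono (n + 1).le_succ

end cdfPmfRatio

theorem mul_succ_eq_of_eq_div_prod {C α : ℝ} {μ π : ℕ → ℝ} (hμ : ∀ n, μ (n + 1) ≠ 0)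
    (hπ : ∀ n, π n = C * α ^ n / ∏ i ∈ range n, μ (i + 1)) (n : ℕ) :
    μ (n + 1) * π (n + 1) = α * π n := by
  rw [hπ, hπ, prod_range_succ, pow_succ]
  have := hμ n
  field_simp

/-- The paper's denominator factor `βi + i(i−1)`, i.e. `π n = C α ^ n / ∏ i ∈ Icc 1 n, μ i`. -/
def pbdDeathRate (β : ℝ) (n : ℕ) : ℝ := β * n + n * (n - 1)

theorem pbdDeathRate_zero (β : ℝ) : pbdDeathRate β 0 = 0 := by simp [pbdDeathRate]

theorem pbdDeathRate_succ (β : ℝ) (n : ℕ) :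
    pbdDeathRate β (n + 1) = β * ((n : ℝ) + 1) + ((n : ℝ) + 1) * n := by
  simp [pbdDeathRate]

theorem pbdDeathRate_succ_sub (β : ℝ) (n : ℕ) :
    pbdDeathRate β (n + 1) - pbdDeathRate β n = β + 2 * n := by
  simp only [pbdDeathRate]; push_cast; ring

theorem pbdDeathRate_succ_pos {β : ℝ} (hβ : 0 < β) (n : ℕ) : 0 < pbdDeathRate β (n + 1) := by
  rw [pbdDeathRate_succ]; positivity

theorem stmt_11_general
    (α β : ℝ) (hα : 0 < α) (hβ : 0 < β)
    (C : ℝ) (hC : 0 < C) (π : ℕ → ℝ)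
    (hπ : ∀ n : ℕ, π n =
      C * α ^ n / ∏ i ∈ Finset.range n, (β * ((i : ℝ) + 1) + ((i : ℝ) + 1) * (i : ℝ)))
    (F : ℕ → ℝ) (hF : ∀ i : ℕ, F i = ∑ j ∈ Finset.range (i + 1), π j)
    :
    ∀ i : ℕ,
      0 ≤ F (i + 2) / (α * π (i + 2)) - 2 * (F (i + 1) / (α * π (i + 1))) + F i / (α * π i) := by
  have hμ : ∀ n, pbdDeathRate β (n + 1) ≠ 0 := fun n => (pbdDeathRate_succ_pos hβ n).ne'
  have hπμ : ∀ n, π n = C * α ^ n / ∏ i ∈ range n, pbdDeathRate β (i + 1) := by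
    simpa only [pbdDeathRate_succ] using hπ
  have hπ0 : ∀ n, π n ≠ 0 := fun n => by
    rw [hπμ]; exact div_ne_zero (by positivity) (prod_ne_zero_iff.2 fun i _ => hμ i)
  set s := cdfPmfRatio α (pbdDeathRate β)
  have hF_eq : ∀ k, F k / (α * π k) = s k / α := fun k => by
    rw [hF, div_mul_eq_div_div_swap,
      cdfPmfRatio.eq_sum_div hα.ne' hπ0 (mul_succ_eq_of_eq_div_prod hμ hπμ)]
  have hconvex : Monotone fun n => s (n + 1) - s n :=
    cdfPmfRatio.monotone_sub hα (pbdDeathRate_zero β) (by simpa [pbdDeathRate_succ] using hβ.le)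
      fun m n hmn => by simp only [pbdDeathRate_succ_sub]; gcongr
  intro i
  have hi : s (i + 1) - s i ≤ s (i + 2) - s (i + 1) := hconvex i.le_succ
  rw [hF_eq, hF_eq, hF_eq, show s (i + 2) / α - 2 * (s (i + 1) / α) + s i / α =
    (s (i + 2) - 2 * s (i + 1) + s i) / α by ring]
  exact div_nonneg (by linarith) hα.le

/-- convexity of `e_i^+ = F(i)/(α π_i)` where `F` is the distribution function of PBD(α;0,β,1). -/
theorem stmt_11
    (α β : ℝ) (hα : 0 < α) (hβ : 0 < β)
    (C : ℝ) (hC : 0 < C) (π : ℕ → ℝ)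
    (hπ : ∀ n : ℕ, π n =
      C * α ^ n / ∏ i ∈ Finset.range n, (β * ((i : ℝ) + 1) + ((i : ℝ) + 1) * (i : ℝ)))
    (hπ1 : ∑' n, π n = 1)
    (F : ℕ → ℝ) (hF : ∀ i : ℕ, F i = ∑ j ∈ Finset.range (i + 1), π j)
    :
    ∀ i : ℕ,
      0 ≤ F (i + 2) / (α * π (i + 2)) - 2 * (F (i + 1) / (α * π (i + 1))) + F i / (α * π i) :=
  stmt_11_general α β hα hβ C hC π hπ F hF
end

section
/- The second difference of the Stein solution for f₁ at 1 satisfies Δ²g_{f₁}(1) ≤ 2/(αβ + 2(α + β + β²)). -/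
/-!
The stationarity identity `α 𝔼 h(N+1) = 𝔼[N (β+N-1) h(N)]` of `π`, applied to three rational
test functions, gives closed relations between the moments
`x = 𝔼[1/(β+N)]`, `P = 𝔼[1/((β+N)(β+N+1))]`, `R = 𝔼[1/((β+N)(β+N+1)(β+N+2))]`:
`𝔼 N = α x`, `α P = 1 - β x`, `α R = x - (β+1) P`, while trivially `(β+2) R ≤ P`.
Eliminating `P` and `R` bounds `x`, hence the mean. On the other hand the Stein equation at
`n = 0, 1, 2` expresses `α³ Δ²g_{f₁}(1)` as an affine function of the mean, and the bound on
the mean is exactly what is needed.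
-/

open Finset

namespace PolyBirthDeath

variable {α β C : ℝ} {π : ℕ → ℝ}

theorem pos (hα : 0 < α) (hβ : 0 < β) (hC : 0 < C)
    (hπ : ∀ n : ℕ, π n =
      C * α ^ n / ∏ i ∈ range n, (β * ((i : ℝ) + 1) + ((i : ℝ) + 1) * (i : ℝ)))
    (n : ℕ) : 0 < π n := by
  rw [hπ n]
  have : 0 < ∏ i ∈ range n, (β * ((i : ℝ) + 1) + ((i : ℝ) + 1) * (i : ℝ)) :=
    prod_pos fun i _ => by positivity
  positivity

theorem succ_mul_eq (hβ : 0 < β)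
    (hπ : ∀ n : ℕ, π n =
      C * α ^ n / ∏ i ∈ range n, (β * ((i : ℝ) + 1) + ((i : ℝ) + 1) * (i : ℝ)))
    (n : ℕ) : ((n : ℝ) + 1) * (β + n) * π (n + 1) = α * π n := by
  have hprod : ∏ i ∈ range n, (β * ((i : ℝ) + 1) + ((i : ℝ) + 1) * (i : ℝ)) ≠ 0 :=
    (prod_pos fun i _ => by positivity).ne'
  have hlast : β * ((n : ℝ) + 1) + ((n : ℝ) + 1) * (n : ℝ) ≠ 0 := by positivity
  rw [hπ n, hπ (n + 1), prod_range_succ]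
  field_simp
  ring

theorem hasSum_mul_of_succ_eq
    (hrec : ∀ n : ℕ, ((n : ℝ) + 1) * (β + n) * π (n + 1) = α * π n)
    {F G : ℕ → ℝ} (hF0 : F 0 = 0) (hFG : ∀ n : ℕ, F (n + 1) = ((n : ℝ) + 1) * (β + n) * G n)
    (hG : Summable fun n => π n * G n) :
    HasSum (fun n => π n * F n) (α * ∑' n, π n * G n) := by
  have hshift : HasSum (fun n => π (n + 1) * F (n + 1)) (α * ∑' n, π n * G n) := by
    refine (hG.hasSum.mul_left α).congr_fun fun n => ?_
    rw [hFG n]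
    linear_combination G n * hrec n
  have h := (hasSum_nat_add_iff (f := fun n => π n * F n) 1).mp hshift
  rwa [sum_range_one, hF0, mul_zero, add_zero] at h

theorem summable_div_of_le {d : ℕ → ℝ} {c : ℝ} (hsum : Summable π) (hnn : ∀ n, 0 ≤ π n)
    (hc : 0 < c) (hd : ∀ n, c ≤ d n) : Summable fun n => π n / d n :=
  Summable.of_nonneg_of_le (fun n => div_nonneg (hnn n) (hc.le.trans (hd n)))
    (fun n => div_le_div_of_nonneg_left (hnn n) hc (hd n)) (hsum.div_const c)

theorem tsum_natCast_mul_eq (hβ : 0 < β)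
    (hrec : ∀ n : ℕ, ((n : ℝ) + 1) * (β + n) * π (n + 1) = α * π n)
    (hx : Summable fun n => π n / (β + n)) :
    ∑' n : ℕ, (n : ℝ) * π n = α * ∑' n, π n / (β + n) := by
  have h := hasSum_mul_of_succ_eq hrec (F := fun n => (n : ℝ)) (G := fun n => 1 / (β + n))
    (by simp) (fun n => by push_cast; field_simp) (by simpa only [mul_one_div] using hx)
  simp only [mul_one_div] at h
  simpa only [mul_comm] using h.tsum_eq

theorem mul_tsum_div_rising_two (hβ : 0 < β)
    (hrec : ∀ n : ℕ, ((n : ℝ) + 1) * (β + n) * π (n + 1) = α * π n)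
    (hπ1 : HasSum π 1) (hx : Summable fun n => π n / (β + n))
    (hP : Summable fun n => π n / ((β + n) * (β + n + 1))) :
    α * ∑' n, π n / ((β + n) * (β + n + 1)) = 1 - β * ∑' n, π n / (β + n) := by
  have h := hasSum_mul_of_succ_eq hrec (F := fun n => (n : ℝ) / (β + n))
    (G := fun n => 1 / ((β + n) * (β + n + 1)))
    (by simp) (fun n => by push_cast; field_simp; ring) (by simpa only [mul_one_div] using hP)
  simp only [mul_one_div] at h
  refine h.unique ?_
  refine (hπ1.sub (hx.hasSum.mul_left β)).congr_fun fun n => ?_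
  field_simp
  ring

theorem mul_tsum_div_rising_three (hβ : 0 < β)
    (hrec : ∀ n : ℕ, ((n : ℝ) + 1) * (β + n) * π (n + 1) = α * π n)
    (hx : Summable fun n => π n / (β + n))
    (hP : Summable fun n => π n / ((β + n) * (β + n + 1)))
    (hR : Summable fun n => π n / ((β + n) * (β + n + 1) * (β + n + 2))) :
    α * ∑' n, π n / ((β + n) * (β + n + 1) * (β + n + 2))
      = ∑' n, π n / (β + n) - (β + 1) * ∑' n, π n / ((β + n) * (β + n + 1)) := by
  have h := hasSum_mul_of_succ_eq hrec (F := fun n => (n : ℝ) / ((β + n) * (β + n + 1)))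
    (G := fun n => 1 / ((β + n) * (β + n + 1) * (β + n + 2)))
    (by simp) (fun n => by push_cast; field_simp; ring) (by simpa only [mul_one_div] using hR)
  simp only [mul_one_div] at h
  refine h.unique ?_
  refine (hx.hasSum.sub (hP.hasSum.mul_left (β + 1))).congr_fun fun n => ?_
  field_simp
  ring

theorem add_two_mul_tsum_div_rising_three_le (hβ : 0 < β) (hnn : ∀ n, 0 ≤ π n)
    (hP : Summable fun n => π n / ((β + n) * (β + n + 1)))
    (hR : Summable fun n => π n / ((β + n) * (β + n + 1) * (β + n + 2))) :
    (β + 2) * ∑' n, π n / ((β + n) * (β + n + 1) * (β + n + 2))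
      ≤ ∑' n, π n / ((β + n) * (β + n + 1)) := by
  rw [← tsum_mul_left]
  refine (hR.mul_left (β + 2)).tsum_le_tsum (fun n => ?_) hP
  rw [mul_div_assoc', div_le_div_iff₀ (by positivity) (by positivity)]
  have : 0 ≤ π n * ((β + n) * (β + n + 1)) * n := by have := hnn n; positivity
  nlinarith

theorem tsum_div_mul_le (hα : 0 < α) (hβ : 0 < β)
    (hrec : ∀ n : ℕ, ((n : ℝ) + 1) * (β + n) * π (n + 1) = α * π n)
    (hnn : ∀ n, 0 ≤ π n) (hπ1 : HasSum π 1) :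
    (∑' n, π n / (β + n)) * (α * (β + 2) + β * ((β + 1) * (β + 2) + α))
      ≤ (β + 1) * (β + 2) + α := by
  have hx : Summable fun n => π n / (β + n) :=
    summable_div_of_le hπ1.summable hnn hβ fun n => by simp
  have hP : Summable fun n => π n / ((β + n) * (β + n + 1)) :=
    summable_div_of_le hπ1.summable hnn hβ fun n => by nlinarith [(n.cast_nonneg : (0 : ℝ) ≤ n)]
  have hR : Summable fun n => π n / ((β + n) * (β + n + 1) * (β + n + 2)) :=
    summable_div_of_le hπ1.summable hnn hβ fun n => by
      have : (0 : ℝ) ≤ n := n.cast_nonneg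
      have : β ≤ (β + n) * (β + n + 1) := by nlinarith
      nlinarith
  have h2 := mul_tsum_div_rising_two hβ hrec hπ1 hx hP
  have h3 := mul_tsum_div_rising_three hβ hrec hx hP hR
  have hle := mul_le_mul_of_nonneg_left (add_two_mul_tsum_div_rising_three_le hβ hnn hP hR) hα.le
  set x := ∑' n, π n / (β + n)
  set P := ∑' n, π n / ((β + n) * (β + n + 1))
  set R := ∑' n, π n / ((β + n) * (β + n + 1) * (β + n + 2))
  have hxP : (β + 2) * x ≤ ((β + 1) * (β + 2) + α) * P := by
    linear_combination hle - (β + 2) * h3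
  linear_combination mul_le_mul_of_nonneg_left hxP hα.le + ((β + 1) * (β + 2) + α) * h2

end PolyBirthDeath

theorem stein_second_diff_one {α β μ : ℝ} {g : ℕ → ℝ}
    (hg : ∀ n : ℕ, α * g (n + 1) - (β * (n : ℝ) + (n : ℝ) * ((n : ℝ) - 1)) * g n = μ - n) :
    α ^ 3 * (g 3 - 2 * g 2 + g 1) = 2 * μ * (α + β + β ^ 2) - 2 * α * (β + 1) := by
  have h0 := hg 0
  have h1 := hg 1
  have h2 := hg 2
  norm_num at h0 h1 h2
  linear_combination α ^ 2 * h2 + (2 * β + 2 - 2 * α) * α * h1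
    + (α ^ 2 + (2 * β + 2 - 2 * α) * β) * h0

theorem le_two_div_of_inv_moment_bound {α β x Δ : ℝ} (hα : 0 < α) (hβ : 0 < β)
    (hx : x * (α * (β + 2) + β * ((β + 1) * (β + 2) + α)) ≤ (β + 1) * (β + 2) + α)
    (hΔ : α ^ 3 * Δ = 2 * (α * x) * (α + β + β ^ 2) - 2 * α * (β + 1)) :
    Δ ≤ 2 / (α * β + 2 * (α + β + β ^ 2)) := by
  set S := α + β + β ^ 2
  set D := α * β + 2 * S
  set E := α * (β + 2) + β * ((β + 1) * (β + 2) + α)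
  have hD : 0 < D := by positivity
  have hE : 0 < E := by positivity
  have hxSD : x * (S * D) ≤ (β + 1) * D + α ^ 2 := by
    refine le_of_mul_le_mul_right ?_ hE
    have hgap : 0 ≤ α ^ 2 * β ^ 3 + α ^ 2 * β ^ 2 + α ^ 3 * β := by positivity
    linear_combination (S * D) * hx + hgap
  rw [le_div_iff₀ hD]
  refine le_of_mul_le_mul_left ?_ (pow_pos hα 3)
  linear_combination D * hΔ + 2 * α * hxSD

theorem stmt_13_general
    (α β : ℝ) (hα : 0 < α) (hβ : 0 < β)
    (C : ℝ) (hC : 0 < C) (π : ℕ → ℝ)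
    (hπ : ∀ n : ℕ, π n =
      C * α ^ n / ∏ i ∈ Finset.range n, (β * ((i : ℝ) + 1) + ((i : ℝ) + 1) * (i : ℝ)))
    (hπ1 : ∑' n, π n = 1)
    (g₁ : ℕ → ℝ)
    (hg₁ : ∀ n : ℕ, α * g₁ (n + 1) - (β * (n : ℝ) + (n : ℝ) * ((n : ℝ) - 1)) * g₁ n
      = -(n : ℝ) - ∑' k : ℕ, -(k : ℝ) * π k)
    :
    g₁ 3 - 2 * g₁ 2 + g₁ 1 ≤ 2 / (α * β + 2 * (α + β + β ^ 2)) := by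
  have hnn n := (PolyBirthDeath.pos hα hβ hC hπ n).le
  have hrec := PolyBirthDeath.succ_mul_eq hβ hπ
  have hsum : HasSum π 1 := by
    have hs : Summable π := by
      by_contra h
      rw [tsum_eq_zero_of_not_summable h] at hπ1
      exact zero_ne_one hπ1
    exact hπ1 ▸ hs.hasSum
  have hmean := PolyBirthDeath.tsum_natCast_mul_eq hβ hrec
    (PolyBirthDeath.summable_div_of_le hsum.summable hnn hβ fun n => by simp)
  have hg : ∀ n : ℕ, α * g₁ (n + 1) - (β * (n : ℝ) + (n : ℝ) * ((n : ℝ) - 1)) * g₁ n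
      = (∑' k : ℕ, (k : ℝ) * π k) - n := fun n => by
    rw [hg₁ n]
    simp only [neg_mul, tsum_neg]
    ring
  refine le_two_div_of_inv_moment_bound hα hβ
    (PolyBirthDeath.tsum_div_mul_le hα hβ hrec hnn hsum) ?_
  rw [stein_second_diff_one hg, hmean]

/-- bound on the second difference at 1 of the Stein solution for `f₁`. -/
theorem stmt_13
    (α β : ℝ) (hα : 0 < α) (hβ : 0 < β)
    (C : ℝ) (hC : 0 < C) (π : ℕ → ℝ)
    (hπ : ∀ n : ℕ, π n =
      C * α ^ n / ∏ i ∈ Finset.range n, (β * ((i : ℝ) + 1) + ((i : ℝ) + 1) * (i : ℝ)))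
    (hπ1 : ∑' n, π n = 1)
    (g₁ : ℕ → ℝ) (hg₁0 : g₁ 0 = g₁ 1)
    (hg₁ : ∀ n : ℕ, α * g₁ (n + 1) - (β * (n : ℝ) + (n : ℝ) * ((n : ℝ) - 1)) * g₁ n
      = -(n : ℝ) - ∑' k : ℕ, -(k : ℝ) * π k)
    :
    g₁ 3 - 2 * g₁ 2 + g₁ 1 ≤ 2 / (α * β + 2 * (α + β + β ^ 2)) :=
  stmt_13_general α β hα hβ C hC π hπ hπ1 g₁ hg₁
end

section
/- The mean of the PBD(α;0,β,1) distribution satisfies ∑_{k=1}^∞ k π_k ≤ √(α + (1 − β)²/4) + (1 − β)/2. -/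
/-! The recursion `k (k - 1 + β) π_k = α π_{k-1}` turns the partial second moment into
`α · (mass) + (1 - β) · (partial mean)`, while Cauchy–Schwarz against the weights `π`, of total
mass at most one, bounds the squared partial mean by the partial second moment. So every partial
mean `t` satisfies `t² ≤ α + (1 - β) t`, i.e. lies below the larger root of that quadratic. -/

open Finset

theorem sq_sum_mul_le_sum_sq_mul {ι R : Type*} [CommRing R] [LinearOrder R] [IsStrictOrderedRing R]
    (s : Finset ι) (f w : ι → R) (hw : ∀ i ∈ s, 0 ≤ w i) (hw1 : ∑ i ∈ s, w i ≤ 1) :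
    (∑ i ∈ s, f i * w i) ^ 2 ≤ ∑ i ∈ s, f i ^ 2 * w i := by
  have hsq : 0 ≤ ∑ i ∈ s, f i ^ 2 * w i :=
    sum_nonneg fun i hi => mul_nonneg (sq_nonneg _) (hw i hi)
  calc (∑ i ∈ s, f i * w i) ^ 2 ≤ (∑ i ∈ s, f i ^ 2 * w i) * ∑ i ∈ s, w i :=
        sum_sq_le_sum_mul_sum_of_sq_le_mul s (fun i hi => mul_nonneg (sq_nonneg _) (hw i hi)) hw
          fun i _ => le_of_eq (by ring)
    _ ≤ ∑ i ∈ s, f i ^ 2 * w i := mul_le_of_le_one_right hsq hw1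

theorem le_sqrt_add_add_of_sq_le_add_mul {t a c : ℝ} (h : t ^ 2 ≤ a + c * t) :
    t ≤ √(a + c ^ 2 / 4) + c / 2 := by
  have := Real.abs_le_sqrt (show (t - c / 2) ^ 2 ≤ a + c ^ 2 / 4 by nlinarith)
  linarith [le_abs_self (t - c / 2)]

section BirthDeathRecursion

variable {α β : ℝ} {p : ℕ → ℝ}

theorem sum_range_succ_sq_mul_eq (hrec : ∀ k : ℕ, ((k : ℝ) + 1) * (k + β) * p (k + 1) = α * p k)
    (N : ℕ) :
    ∑ k ∈ range (N + 1), (k : ℝ) ^ 2 * p k =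
      α * ∑ k ∈ range N, p k + (1 - β) * ∑ k ∈ range (N + 1), (k : ℝ) * p k := by
  have hshift : ∑ k ∈ range (N + 1), (k : ℝ) * (k - 1 + β) * p k = α * ∑ k ∈ range N, p k := by
    rw [sum_range_succ', mul_sum]
    simp [← hrec, add_sub_cancel_right, add_comm]
  rw [← hshift, mul_sum, ← sum_add_distrib]
  exact sum_congr rfl fun k _ => by ring

theorem sq_sum_range_mul_le (hp : ∀ k, 0 ≤ p k) (hp1 : ∀ N, ∑ k ∈ range N, p k ≤ 1) (hα : 0 ≤ α)
    (hrec : ∀ k : ℕ, ((k : ℝ) + 1) * (k + β) * p (k + 1) = α * p k) (N : ℕ) :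
    (∑ k ∈ range N, (k : ℝ) * p k) ^ 2 ≤ α + (1 - β) * ∑ k ∈ range N, (k : ℝ) * p k := by
  rcases N with _ | N
  · simpa using hα
  calc (∑ k ∈ range (N + 1), (k : ℝ) * p k) ^ 2 ≤ ∑ k ∈ range (N + 1), (k : ℝ) ^ 2 * p k :=
        sq_sum_mul_le_sum_sq_mul _ _ _ (fun k _ => hp k) (hp1 _)
    _ = α * ∑ k ∈ range N, p k + (1 - β) * ∑ k ∈ range (N + 1), (k : ℝ) * p k :=
        sum_range_succ_sq_mul_eq hrec N
    _ ≤ α + (1 - β) * ∑ k ∈ range (N + 1), (k : ℝ) * p k := by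
        gcongr; exact mul_le_of_le_one_right hα (hp1 N)

theorem tsum_mul_le_sqrt (hp : ∀ k, 0 ≤ p k) (hp1 : ∀ N, ∑ k ∈ range N, p k ≤ 1) (hα : 0 ≤ α)
    (hrec : ∀ k : ℕ, ((k : ℝ) + 1) * (k + β) * p (k + 1) = α * p k) :
    ∑' k : ℕ, (k : ℝ) * p k ≤ √(α + (1 - β) ^ 2 / 4) + (1 - β) / 2 :=
  Real.tsum_le_of_sum_range_le (fun k => mul_nonneg k.cast_nonneg (hp k)) fun N =>
    le_sqrt_add_add_of_sq_le_add_mul (sq_sum_range_mul_le hp hp1 hα hrec N)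

end BirthDeathRecursion

/-- upper bound on the mean of PBD(α;0,β,1). -/
theorem stmt_15
    (α β : ℝ) (hα : 0 < α) (hβ : 0 < β)
    (C : ℝ) (hC : 0 < C) (π : ℕ → ℝ)
    (hπ : ∀ n : ℕ, π n =
      C * α ^ n / ∏ i ∈ Finset.range n, (β * ((i : ℝ) + 1) + ((i : ℝ) + 1) * (i : ℝ)))
    (hπ1 : ∑' n, π n = 1)
    :
    ∑' k : ℕ, (k : ℝ) * π k ≤ Real.sqrt (α + (1 - β) ^ 2 / 4) + (1 - β) / 2 := by
  have hfactor : ∀ i : ℕ, β * ((i : ℝ) + 1) + ((i : ℝ) + 1) * i = ((i : ℝ) + 1) * (i + β) :=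
    fun i => by ring
  have hfactor_pos : ∀ i : ℕ, 0 < ((i : ℝ) + 1) * (i + β) := fun i => by positivity
  simp only [hfactor] at hπ
  have hp : ∀ k, 0 ≤ π k := fun k => by
    rw [hπ]; exact div_nonneg (by positivity) (prod_nonneg fun i _ => (hfactor_pos i).le)
  have hsum : Summable π := by
    by_contra h
    simp [tsum_eq_zero_of_not_summable h] at hπ1
  have hrec : ∀ k : ℕ, ((k : ℝ) + 1) * (k + β) * π (k + 1) = α * π k := fun k => by
    rw [hπ, hπ, prod_range_succ, pow_succ]
    field_simp [(hfactor_pos k).ne']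
  exact tsum_mul_le_sqrt hp (fun N => hπ1 ▸ hsum.sum_le_tsum _ fun k _ => hp k) hα.le hrec
end

section
/- For every i ≥ 0, the truncated first moment of the upper tail of PBD(α;0,β,1) satisfies ∑_{k > i} (k − i) π_k ≤ (1 + √α) F̄(i+1). -/
/-!
Put `a = i + 1` and `F̄(a) = ∑_{k ≥ a} π_k`; the left side is `F̄(a) + ∑_{k ≥ a} (k - a) π_k`.
The weights satisfy detailed balance `(n + 1)(β + n) π_{n+1} = α π_n`, and
`(n + 1 - a)² ≤ (n + 1)(β + n)` for `n ≥ a ≥ 1`, so the tail second moment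
`∑_{k ≥ a} (k - a)² π_k` is at most `α F̄(a)`. AM-GM, `2√α (k - a) ≤ α + (k - a)²`,
then bounds the tail first moment by `√α F̄(a)`.
-/

open Finset

section WeightedMean

variable {ι : Type*} {w x : ι → ℝ}

lemma summable_mul_of_summable_sq_mul (hw : ∀ k, 0 ≤ w k) (hws : Summable w)
    (hxs : Summable fun k => x k ^ 2 * w k) : Summable fun k => x k * w k := by
  refine (hws.add hxs).of_norm_bounded fun k => ?_
  rw [Real.norm_eq_abs, abs_mul, abs_of_nonneg (hw k)]
  have : |x k| ≤ 1 + x k ^ 2 := by nlinarith [sq_abs (x k), abs_nonneg (x k)]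
  nlinarith [mul_le_mul_of_nonneg_right this (hw k)]

lemma tsum_mul_le_sqrt_mul_tsum {c : ℝ} (hc : 0 < c) (hw : ∀ k, 0 ≤ w k) (hws : Summable w)
    (hxs : Summable fun k => x k ^ 2 * w k) (hsq : ∑' k, x k ^ 2 * w k ≤ c * ∑' k, w k) :
    ∑' k, x k * w k ≤ √c * ∑' k, w k := by
  have amgm : ∀ k, 2 * √c * (x k * w k) ≤ c * w k + x k ^ 2 * w k := fun k => by
    linear_combination mul_nonneg (sq_nonneg (√c - x k)) (hw k) + w k * Real.sq_sqrt hc.le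
  have hsum := Summable.tsum_le_tsum amgm
    ((summable_mul_of_summable_sq_mul hw hws hxs).mul_left _) ((hws.mul_left c).add hxs)
  rw [tsum_mul_left, (hws.mul_left c).tsum_add hxs, tsum_mul_left] at hsum
  refine le_of_mul_le_mul_left ?_ (by positivity : 0 < 2 * √c)
  calc 2 * √c * ∑' k, x k * w k ≤ 2 * c * ∑' k, w k := by linarith
    _ = 2 * √c * (√c * ∑' k, w k) := by
      rw [← mul_assoc, mul_assoc 2 √c √c, Real.mul_self_sqrt hc.le]

end WeightedMean

section DetailedBalance

variable {α β : ℝ} {π : ℕ → ℝ}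

lemma summable_sq_mul_of_detailed_balance (hβ : 0 ≤ β) (hπ : ∀ n, 0 ≤ π n)
    (hdb : ∀ n : ℕ, ((n : ℝ) + 1) * (β + n) * π (n + 1) = α * π n) :
    Summable fun n : ℕ => (n : ℝ) ^ 2 * π n := by
  refine summable_of_ratio_norm_eventually_le (r := 1 / 2) (by norm_num) ?_
  filter_upwards [Filter.eventually_ge_atTop (⌈4 * α⌉₊ + 1)] with n hn
  have hn1 : (1 : ℝ) ≤ n := by exact_mod_cast (Nat.le_add_left 1 _).trans hn
  have hnα : 4 * α ≤ n := (Nat.le_ceil _).trans (by exact_mod_cast (Nat.le_succ _).trans hn)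
  have key : α * ((n : ℝ) + 1) ≤ n ^ 2 * (β + n) / 2 := by nlinarith
  have := hπ n
  have := hπ (n + 1)
  rw [Real.norm_of_nonneg (by positivity), Real.norm_of_nonneg (by positivity)]
  refine le_of_mul_le_mul_right ?_ (by positivity : 0 < ((n : ℝ) + 1) * (β + n))
  push_cast
  calc ((n : ℝ) + 1) ^ 2 * π (n + 1) * (((n : ℝ) + 1) * (β + n))
      = α * ((n : ℝ) + 1) * (((n : ℝ) + 1) * π n) := by
        linear_combination ((n : ℝ) + 1) ^ 2 * hdb n
    _ ≤ n ^ 2 * (β + n) / 2 * (((n : ℝ) + 1) * π n) := by gcongr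
    _ = 1 / 2 * ((n : ℝ) ^ 2 * π n) * (((n : ℝ) + 1) * (β + n)) := by ring

lemma summable_of_summable_sq_mul (hπ : ∀ n, 0 ≤ π n)
    (hsq : Summable fun n : ℕ => (n : ℝ) ^ 2 * π n) : Summable π :=
  (summable_nat_add_iff 1).mp <| ((summable_nat_add_iff 1).mpr hsq).of_nonneg_of_le
    (fun n => hπ _) fun n => le_mul_of_one_le_left (hπ _) (one_le_pow₀ (by simp))

lemma tail_nonneg (hπ : ∀ n, 0 ≤ π n) (a k : ℕ) : 0 ≤ if a ≤ k then π k else 0 := by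
  split_ifs
  exacts [hπ k, le_rfl]

lemma summable_tail (hπ : ∀ n, 0 ≤ π n) (hπs : Summable π) (a : ℕ) :
    Summable fun k : ℕ => if a ≤ k then π k else 0 :=
  hπs.of_nonneg_of_le (tail_nonneg hπ a) (fun k => by split_ifs; exacts [le_rfl, hπ k])

lemma summable_sq_mul_tail (hπ : ∀ n, 0 ≤ π n) (hsq : Summable fun n : ℕ => (n : ℝ) ^ 2 * π n)
    (a : ℕ) : Summable fun k : ℕ => ((k : ℝ) - a) ^ 2 * (if a ≤ k then π k else 0) := by
  refine hsq.of_nonneg_of_le (fun k => mul_nonneg (sq_nonneg _) (tail_nonneg hπ a k))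
    fun k => ?_
  split_ifs with hk
  · have : (a : ℝ) ≤ k := by exact_mod_cast hk
    have := hπ k
    gcongr
    nlinarith [Nat.cast_nonneg (α := ℝ) a]
  · simpa using mul_nonneg (sq_nonneg (k : ℝ)) (hπ k)

lemma tsum_sq_mul_tail_le (hβ : 0 ≤ β) (hπ : ∀ n, 0 ≤ π n) (hπs : Summable π)
    (hsq : Summable fun n : ℕ => (n : ℝ) ^ 2 * π n)
    (hdb : ∀ n : ℕ, ((n : ℝ) + 1) * (β + n) * π (n + 1) = α * π n)
    {a : ℕ} (ha : 1 ≤ a) :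
    ∑' k : ℕ, ((k : ℝ) - a) ^ 2 * (if a ≤ k then π k else 0)
      ≤ α * ∑' k : ℕ, if a ≤ k then π k else 0 := by
  have hg := summable_sq_mul_tail hπ hsq a
  rw [hg.tsum_eq_zero_add, if_neg (show ¬a ≤ 0 by omega), mul_zero, zero_add, ← tsum_mul_left]
  have hg_succ := (summable_nat_add_iff 1).mpr hg
  refine Summable.tsum_le_tsum (fun m => ?_) hg_succ ((summable_tail hπ hπs a).mul_left α)
  by_cases ham : a ≤ m
  · rw [if_pos (show a ≤ m + 1 by omega), if_pos ham]
    have : (a : ℝ) ≤ m := by exact_mod_cast ham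
    have : (1 : ℝ) ≤ a := by exact_mod_cast ha
    push_cast
    calc ((m : ℝ) + 1 - a) ^ 2 * π (m + 1) ≤ ((m : ℝ) + 1) * (β + m) * π (m + 1) := by
          gcongr
          · exact hπ _
          · have h0 : 0 ≤ (m : ℝ) + 1 - a := by linarith
            calc ((m : ℝ) + 1 - a) ^ 2 ≤ (m : ℝ) ^ 2 := pow_le_pow_left₀ h0 (by linarith) 2
              _ ≤ ((m : ℝ) + 1) * (β + m) := by
                nlinarith [mul_nonneg (Nat.cast_nonneg (α := ℝ) m) hβ]
      _ = α * π m := hdb m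
  · rw [if_neg ham, mul_zero]
    rcases (show a = m + 1 ∨ ¬ a ≤ m + 1 by omega) with rfl | h
    · simp
    · simp [h]

end DetailedBalance

section PolynomialBirthDeath

variable {α β C : ℝ} {π : ℕ → ℝ}

lemma pbd_nonneg (hα : 0 ≤ α) (hβ : 0 < β) (hC : 0 ≤ C)
    (hπ : ∀ n : ℕ, π n =
      C * α ^ n / ∏ i ∈ Finset.range n, (β * ((i : ℝ) + 1) + ((i : ℝ) + 1) * (i : ℝ))) :
    ∀ n, 0 ≤ π n := fun n => by
  rw [hπ]
  positivity

lemma pbd_detailed_balance (hβ : 0 < β)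
    (hπ : ∀ n : ℕ, π n =
      C * α ^ n / ∏ i ∈ Finset.range n, (β * ((i : ℝ) + 1) + ((i : ℝ) + 1) * (i : ℝ)))
    (n : ℕ) : ((n : ℝ) + 1) * (β + n) * π (n + 1) = α * π n := by
  have : 0 < ∏ i ∈ range n, (β * ((i : ℝ) + 1) + ((i : ℝ) + 1) * i) :=
    prod_pos fun i _ => by positivity
  rw [hπ, hπ, prod_range_succ]
  field_simp
  ring

end PolynomialBirthDeath

theorem stmt_17_general
    (α β : ℝ) (hα : 0 < α) (hβ : 0 < β)
    (C : ℝ) (hC : 0 < C) (π : ℕ → ℝ)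
    (hπ : ∀ n : ℕ, π n =
      C * α ^ n / ∏ i ∈ Finset.range n, (β * ((i : ℝ) + 1) + ((i : ℝ) + 1) * (i : ℝ)))
    (Fbar : ℕ → ℝ) (hFbar : ∀ i : ℕ, Fbar i = ∑' j : ℕ, if i ≤ j then π j else 0)
    :
    ∀ i : ℕ, (∑' k : ℕ, if i < k then ((k : ℝ) - (i : ℝ)) * π k else 0)
      ≤ (1 + Real.sqrt α) * Fbar (i + 1) := by
  intro i
  have hnn := pbd_nonneg hα.le hβ hC.le hπ
  have hdb := pbd_detailed_balance hβ hπ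
  have hsq := summable_sq_mul_of_detailed_balance hβ.le hnn hdb
  have hπs := summable_of_summable_sq_mul hnn hsq
  have hws := summable_tail hnn hπs (i + 1)
  have hwnn := tail_nonneg hnn (i + 1)
  have hxs := summable_sq_mul_tail hnn hsq (i + 1)
  have hsplit : (fun k : ℕ => if i < k then ((k : ℝ) - i) * π k else 0) = fun k =>
      (if i + 1 ≤ k then π k else 0)
        + ((k : ℝ) - (i + 1 : ℕ)) * (if i + 1 ≤ k then π k else 0) := by
    funext k
    split_ifs <;> first | omega | (push_cast; ring)
  rw [hsplit, hws.tsum_add (summable_mul_of_summable_sq_mul hwnn hws hxs), hFbar, add_mul, one_mul]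
  exact add_le_add le_rfl (tsum_mul_le_sqrt_mul_tsum hα hwnn hws hxs
    (tsum_sq_mul_tail_le hβ.le hnn hπs hsq hdb (by omega)))

/-- truncated first moment bound for the upper tail of PBD(α;0,β,1). -/
theorem stmt_17
    (α β : ℝ) (hα : 0 < α) (hβ : 0 < β)
    (C : ℝ) (hC : 0 < C) (π : ℕ → ℝ)
    (hπ : ∀ n : ℕ, π n =
      C * α ^ n / ∏ i ∈ Finset.range n, (β * ((i : ℝ) + 1) + ((i : ℝ) + 1) * (i : ℝ)))
    (hπ1 : ∑' n, π n = 1)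
    (Fbar : ℕ → ℝ) (hFbar : ∀ i : ℕ, Fbar i = ∑' j : ℕ, if i ≤ j then π j else 0)
    :
    ∀ i : ℕ, (∑' k : ℕ, if i < k then ((k : ℝ) - (i : ℝ)) * π k else 0)
      ≤ (1 + Real.sqrt α) * Fbar (i + 1) :=
  stmt_17_general α β hα hβ C hC π hπ Fbar hFbar
end

section
/- For every i ≥ 1 and every k ∈ ℤ₊, the second difference of the Stein solution g_k for the indicator function of {k} satisfies: Δ²g_k(i) ≥ 0 if k ≤ i−1 or k = i+1, and Δ²g_k(i) ≤ 0 if k ≥ i+2. -/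
/-!
Put `a n = β n + n (n - 1)`, so that `π (n + 1) a (n + 1) = α π n`, and `F m = π 0 + ⋯ + π m`.
Multiplied by `π m`, the Stein equation telescopes to `α π m g_k (m + 1) = π k (1{k ≤ m} - F m)`.
So `g_k (m + 1)` is `-(π k / α) F m / π m` for `m < k` and `(π k / α) (1 - F m) / π m` for `m ≥ k`,
and the signs of `Δ²g_k` follow once `F n / π n` is nondecreasing and convex and `(1 - F n) / π n`
is nonnegative and convex. Both ratios are series of products of rates:
`F n / π n = ∑ₜ ∏_{s<t} a (n - s) / α` is a sum of products of nonnegative, nondecreasing, convex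
sequences, and `(1 - F n) / π n = ∑ₘ ∏_{s≤m} α / a (n + s + 1)` is a sum of log-convex sequences,
because `a` is log-concave.
-/

open Finset

def DiscreteConvex (f : ℕ → ℝ) : Prop := ∀ n, 0 ≤ f (n + 2) - 2 * f (n + 1) + f n

def DiscreteLogConvex (f : ℕ → ℝ) : Prop := ∀ n, f (n + 1) ^ 2 ≤ f n * f (n + 2)

namespace DiscreteConvex

variable {f g : ℕ → ℝ}

theorem div_const (hf : DiscreteConvex f) {c : ℝ} (hc : 0 ≤ c) :
    DiscreteConvex fun n => f n / c := fun n => by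
  dsimp only
  rw [show f (n + 2) / c - 2 * (f (n + 1) / c) + f n / c = (f (n + 2) - 2 * f (n + 1) + f n) / c
    by ring]
  exact div_nonneg (hf n) hc

theorem comp_tsub (hf : DiscreteConvex f) (hmono : Monotone f) (s : ℕ) :
    DiscreteConvex fun n => f (n - s) := by
  intro n
  rcases lt_trichotomy (n + 1) s with h | h | h
  · simp only [show n + 2 - s = 0 by omega, show n + 1 - s = 0 by omega,
      show n - s = 0 by omega]
    linarith
  · simp only [show n + 2 - s = 1 by omega, show n + 1 - s = 0 by omega,
      show n - s = 0 by omega]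
    linarith [hmono (zero_le_one' ℕ)]
  · simpa only [show n + 2 - s = n - s + 2 by omega, show n + 1 - s = n - s + 1 by omega]
      using hf (n - s)

theorem mul (hf : DiscreteConvex f) (hg : DiscreteConvex g) (hf0 : ∀ n, 0 ≤ f n)
    (hg0 : ∀ n, 0 ≤ g n) (hfm : Monotone f) (hgm : Monotone g) :
    DiscreteConvex fun n => f n * g n := by
  intro n
  have hΔf (m : ℕ) : 0 ≤ f (m + 1) - f m := sub_nonneg.2 (hfm m.le_succ)
  have hΔg : 0 ≤ g (n + 1) - g n := sub_nonneg.2 (hgm n.le_succ)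
  have hleibniz : f (n + 2) * g (n + 2) - 2 * (f (n + 1) * g (n + 1)) + f n * g n =
      f (n + 2) * (g (n + 2) - 2 * g (n + 1) + g n) + g (n + 1) * (f (n + 2) - 2 * f (n + 1) + f n)
        + (g (n + 1) - g n) * ((f (n + 2) - f (n + 1)) + (f (n + 1) - f n)) := by ring
  rw [hleibniz]
  exact add_nonneg (add_nonneg (mul_nonneg (hf0 _) (hg n)) (mul_nonneg (hg0 _) (hf n)))
    (mul_nonneg hΔg (add_nonneg (hΔf _) (hΔf n)))

theorem prod {ι : Type*} (s : Finset ι) {f : ι → ℕ → ℝ} (hf : ∀ i ∈ s, DiscreteConvex (f i))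
    (hf0 : ∀ i ∈ s, ∀ n, 0 ≤ f i n) (hfm : ∀ i ∈ s, Monotone (f i)) :
    DiscreteConvex fun n => ∏ i ∈ s, f i n := by
  classical
  induction s using Finset.induction_on with
  | empty => intro n; norm_num
  | insert j s hj ih =>
    simp only [Finset.prod_insert hj]
    simp only [Finset.mem_insert, forall_eq_or_imp] at hf hf0 hfm
    exact hf.1.mul (ih hf.2 hf0.2 hfm.2) hf0.1 (fun n => prod_nonneg fun i hi => hf0.2 i hi n)
      hfm.1 (fun m n hmn => prod_le_prod (fun i hi => hf0.2 i hi m) fun i hi => hfm.2 i hi hmn)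

theorem of_hasSum {ι : Type*} {f : ι → ℕ → ℝ} {F : ℕ → ℝ} (hf : ∀ i, DiscreteConvex (f i))
    (hF : ∀ n, HasSum (fun i => f i n) (F n)) : DiscreteConvex F := fun n =>
  HasSum.nonneg (fun i => hf i n) (((hF (n + 2)).sub ((hF (n + 1)).mul_left 2)).add (hF n))

/-- The discrete AM–GM step: `f n + f (n+2) ≥ 2 √(f n f (n+2)) ≥ 2 f (n+1)`. -/
theorem of_logConvex (hpos : ∀ n, 0 < f n) (hf : DiscreteLogConvex f) : DiscreteConvex f := by
  intro n
  nlinarith [hf n, hpos n, hpos (n + 1), hpos (n + 2), sq_nonneg (f n - f (n + 2))]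

end DiscreteConvex

theorem DiscreteLogConvex.prod {ι : Type*} (s : Finset ι) {f : ι → ℕ → ℝ}
    (hf : ∀ i ∈ s, DiscreteLogConvex (f i)) :
    DiscreteLogConvex fun n => ∏ i ∈ s, f i n := fun n => by
  rw [← prod_pow, ← prod_mul_distrib]
  exact prod_le_prod (fun i hi => sq_nonneg _) fun i hi => hf i hi n

namespace BirthDeath

variable {α : ℝ} {a π g : ℕ → ℝ} {k : ℕ}

noncomputable def cdfRatio (π : ℕ → ℝ) (n : ℕ) : ℝ := (∑ j ∈ range (n + 1), π j) / π n

noncomputable def tailRatio (π : ℕ → ℝ) (n : ℕ) : ℝ := (1 - ∑ j ∈ range (n + 1), π j) / π n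

theorem rate_succ_pos (hα : 0 < α) (hπ : ∀ n, 0 < π n)
    (hrec : ∀ n, π (n + 1) * a (n + 1) = α * π n) (n : ℕ) : 0 < a (n + 1) :=
  pos_of_mul_pos_right ((hrec n).symm ▸ mul_pos hα (hπ n)) (hπ (n + 1)).le

theorem rate_nonneg (hα : 0 < α) (ha0 : a 0 = 0) (hπ : ∀ n, 0 < π n)
    (hrec : ∀ n, π (n + 1) * a (n + 1) = α * π n) (n : ℕ) : 0 ≤ a n := by
  cases n with
  | zero => exact ha0.ge
  | succ n => exact (rate_succ_pos hα hπ hrec n).le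

theorem prob_sub_eq_mul_prod (hα : α ≠ 0) (hrec : ∀ n, π (n + 1) * a (n + 1) = α * π n)
    {n t : ℕ} (ht : t ≤ n) : π (n - t) = π n * ∏ s ∈ range t, a (n - s) / α := by
  induction t with
  | zero => simp
  | succ t ih =>
    obtain ⟨m, rfl⟩ : ∃ m, n = m + t + 1 := ⟨n - t - 1, by omega⟩
    rw [prod_range_succ, ← mul_assoc, ← ih (by omega), show m + t + 1 - t = m + 1 by omega,
      show m + t + 1 - (t + 1) = m by omega, mul_div_assoc', hrec m, mul_div_cancel_left₀ _ hα]

theorem prob_add_eq_mul_prod (hα : 0 < α) (hπ : ∀ n, 0 < π n)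
    (hrec : ∀ n, π (n + 1) * a (n + 1) = α * π n) (n m : ℕ) :
    π (n + m) = π n * ∏ s ∈ range m, α / a (n + s + 1) := by
  induction m with
  | zero => simp
  | succ m ih =>
    rw [prod_range_succ, ← mul_assoc, ← ih, ← add_assoc, mul_div_assoc',
      eq_div_iff (rate_succ_pos hα hπ hrec _).ne', hrec, mul_comm]

/-- The factor `a 0 = 0` makes the terms with `t > n` vanish. -/
theorem hasSum_cdfRatio (hα : α ≠ 0) (ha0 : a 0 = 0) (hπ : ∀ n, 0 < π n)
    (hrec : ∀ n, π (n + 1) * a (n + 1) = α * π n) (n : ℕ) :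
    HasSum (fun t => ∏ s ∈ range t, a (n - s) / α) (cdfRatio π n) := by
  have hvanish : ∀ t ∉ range (n + 1), ∏ s ∈ range t, a (n - s) / α = 0 := fun t ht =>
    prod_eq_zero (i := n) (by simp at ht ⊢; omega) (by simp [ha0])
  suffices cdfRatio π n = ∑ t ∈ range (n + 1), ∏ s ∈ range t, a (n - s) / α from
    this ▸ hasSum_sum_of_ne_finset_zero hvanish
  rw [cdfRatio, ← sum_range_reflect, sum_div]
  refine sum_congr rfl fun t ht => ?_
  rw [show n + 1 - 1 - t = n - t by omega, prob_sub_eq_mul_prod hα hrec (by simp at ht; omega),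
    mul_div_cancel_left₀ _ (hπ n).ne']

theorem hasSum_tailRatio (hα : 0 < α) (hπ : ∀ n, 0 < π n)
    (hrec : ∀ n, π (n + 1) * a (n + 1) = α * π n) (hπ1 : HasSum π 1) (n : ℕ) :
    HasSum (fun m => ∏ s ∈ range (m + 1), α / a (n + s + 1)) (tailRatio π n) := by
  suffices (fun m => ∏ s ∈ range (m + 1), α / a (n + s + 1)) = fun m => π (m + (n + 1)) / π n from
    this ▸ ((hasSum_nat_add_iff' (n + 1)).2 hπ1).div_const (π n)
  funext m
  rw [show m + (n + 1) = n + (m + 1) by omega, prob_add_eq_mul_prod hα hπ hrec,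
    mul_div_cancel_left₀ _ (hπ n).ne']

theorem cdfRatio_nonneg (hπ : ∀ n, 0 < π n) (n : ℕ) : 0 ≤ cdfRatio π n :=
  div_nonneg (sum_nonneg fun j _ => (hπ j).le) (hπ n).le

theorem tailRatio_nonneg (hα : 0 < α) (hπ : ∀ n, 0 < π n)
    (hrec : ∀ n, π (n + 1) * a (n + 1) = α * π n) (hπ1 : HasSum π 1) (n : ℕ) :
    0 ≤ tailRatio π n :=
  (hasSum_tailRatio hα hπ hrec hπ1 n).nonneg fun _ =>
    prod_nonneg fun _ _ => div_nonneg hα.le (rate_succ_pos hα hπ hrec _).le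

theorem monotone_cdfRatio (hα : 0 < α) (ha0 : a 0 = 0) (hmono : Monotone a)
    (hπ : ∀ n, 0 < π n) (hrec : ∀ n, π (n + 1) * a (n + 1) = α * π n) :
    Monotone (cdfRatio π) :=
  monotone_nat_of_le_succ fun n =>
    hasSum_le (fun t => prod_le_prod
        (fun s _ => div_nonneg (rate_nonneg hα ha0 hπ hrec _) hα.le)
        fun s _ => div_le_div_of_nonneg_right (hmono (by omega)) hα.le)
      (hasSum_cdfRatio hα.ne' ha0 hπ hrec n) (hasSum_cdfRatio hα.ne' ha0 hπ hrec (n + 1))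

theorem discreteConvex_cdfRatio (hα : 0 < α) (ha0 : a 0 = 0) (hmono : Monotone a)
    (hconv : DiscreteConvex a) (hπ : ∀ n, 0 < π n)
    (hrec : ∀ n, π (n + 1) * a (n + 1) = α * π n) :
    DiscreteConvex (cdfRatio π) :=
  DiscreteConvex.of_hasSum
    (fun t => DiscreteConvex.prod (range t)
      (fun s _ => (hconv.div_const hα.le).comp_tsub (hmono.div_const hα.le) s)
      (fun _ _ _ => div_nonneg (rate_nonneg hα ha0 hπ hrec _) hα.le)
      fun s _ => (hmono.div_const hα.le).comp fun _ _ h => Nat.sub_le_sub_right h s)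
    (hasSum_cdfRatio hα.ne' ha0 hπ hrec)

theorem discreteConvex_tailRatio (hα : 0 < α) (hlog : ∀ n, a n * a (n + 2) ≤ a (n + 1) ^ 2)
    (hπ : ∀ n, 0 < π n) (hrec : ∀ n, π (n + 1) * a (n + 1) = α * π n) (hπ1 : HasSum π 1) :
    DiscreteConvex (tailRatio π) := by
  have ha (m : ℕ) : 0 < a (m + 1) := rate_succ_pos hα hπ hrec m
  refine DiscreteConvex.of_hasSum (fun _ => DiscreteConvex.of_logConvex
      (fun _ => prod_pos fun _ _ => div_pos hα (ha _))
      (DiscreteLogConvex.prod _ fun s _ n => ?_)) (hasSum_tailRatio hα hπ hrec hπ1)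
  rw [div_pow, div_mul_div_comm, ← sq]
  refine div_le_div_of_nonneg_left (sq_nonneg α) (mul_pos (ha _) (ha _)) ?_
  simpa only [show n + 2 + s + 1 = n + s + 1 + 2 by omega,
    show n + 1 + s + 1 = n + s + 1 + 1 by omega] using hlog (n + s + 1)

/-- Multiplied by `π m`, the Stein equation telescopes, because `a (m + 1) π (m + 1) = α π m`
and `a 0 = 0`. -/
theorem stein_mul_prob_eq (ha0 : a 0 = 0) (hrec : ∀ n, π (n + 1) * a (n + 1) = α * π n)
    (hg : ∀ n, α * g (n + 1) - a n * g n = (if n = k then 1 else 0) - π k) (m : ℕ) :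
    α * π m * g (m + 1) = π k * ((if k ≤ m then 1 else 0) - ∑ j ∈ range (m + 1), π j) := by
  induction m with
  | zero =>
    have h0 := hg 0
    rw [ha0, zero_mul, sub_zero] at h0
    rw [sum_range_one]
    rcases Nat.eq_zero_or_pos k with rfl | hk
    · simp only [if_pos, le_refl] at h0 ⊢
      linear_combination π 0 * h0
    · simp only [if_neg hk.ne, if_neg (Nat.not_le_of_lt hk)] at h0 ⊢
      linear_combination π 0 * h0
  | succ m ih =>
    have hstep : π (m + 1) * (if m + 1 = k then 1 else 0) + π k * (if k ≤ m then 1 else 0) =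
        π k * (if k ≤ m + 1 then 1 else 0) := by
      rcases lt_trichotomy k (m + 1) with h | rfl | h
      · simp [h.ne', Nat.le_of_lt_succ h, h.le]
      · simp
      · simp [h.ne, Nat.not_le_of_lt h, Nat.not_le_of_lt (Nat.lt_of_succ_lt h)]
    rw [sum_range_succ]
    linear_combination π (m + 1) * hg (m + 1) + g (m + 1) * hrec m + ih + hstep

theorem stein_eq_cdfRatio_of_lt (hα : α ≠ 0) (hπ : ∀ n, 0 < π n) (ha0 : a 0 = 0)
    (hrec : ∀ n, π (n + 1) * a (n + 1) = α * π n)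
    (hg : ∀ n, α * g (n + 1) - a n * g n = (if n = k then 1 else 0) - π k) {m : ℕ} (hm : m < k) :
    g (m + 1) = -(π k / α) * cdfRatio π m := by
  have h := stein_mul_prob_eq ha0 hrec hg m
  rw [if_neg (Nat.not_le_of_lt hm)] at h
  rw [cdfRatio]
  field_simp [(hπ m).ne']
  linear_combination h

theorem stein_eq_tailRatio_of_le (hα : α ≠ 0) (hπ : ∀ n, 0 < π n) (ha0 : a 0 = 0)
    (hrec : ∀ n, π (n + 1) * a (n + 1) = α * π n)
    (hg : ∀ n, α * g (n + 1) - a n * g n = (if n = k then 1 else 0) - π k) {m : ℕ} (hm : k ≤ m) :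
    g (m + 1) = π k / α * tailRatio π m := by
  have h := stein_mul_prob_eq ha0 hrec hg m
  rw [if_pos hm] at h
  rw [tailRatio]
  field_simp [(hπ m).ne']
  linear_combination h

theorem stein_indicator_secondDiff_sign (hα : 0 < α)
    (ha0 : a 0 = 0) (hmono : Monotone a) (hconv : DiscreteConvex a)
    (hlog : ∀ n, a n * a (n + 2) ≤ a (n + 1) ^ 2) (hπ : ∀ n, 0 < π n)
    (hrec : ∀ n, π (n + 1) * a (n + 1) = α * π n) (hπ1 : HasSum π 1)
    (hg : ∀ n, α * g (n + 1) - a n * g n = (if n = k then 1 else 0) - π k) (i : ℕ) (hi : 1 ≤ i) :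
    ((k ≤ i - 1 ∨ k = i + 1) → 0 ≤ g (i + 2) - 2 * g (i + 1) + g i) ∧
      (i + 2 ≤ k → g (i + 2) - 2 * g (i + 1) + g i ≤ 0) := by
  obtain ⟨j, rfl⟩ : ∃ j, i = j + 1 := ⟨i - 1, by omega⟩
  have hc : 0 < π k / α := div_pos (hπ k) hα
  have hlow {m : ℕ} (hm : m < k) : g (m + 1) = -(π k / α) * cdfRatio π m :=
    stein_eq_cdfRatio_of_lt hα.ne' hπ ha0 hrec hg hm
  have hup {m : ℕ} (hm : k ≤ m) : g (m + 1) = π k / α * tailRatio π m :=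
    stein_eq_tailRatio_of_le hα.ne' hπ ha0 hrec hg hm
  refine ⟨fun hk => ?_, fun hk => ?_⟩
  · rcases hk with hk | rfl
    · rw [show j + 1 + 2 = j + 2 + 1 by rfl, hup (m := j + 2) (by omega),
        hup (m := j + 1) (by omega), hup (m := j) (by omega)]
      nlinarith [mul_nonneg hc.le (discreteConvex_tailRatio hα hlog hπ hrec hπ1 j)]
    · rw [show j + 1 + 2 = j + 2 + 1 by rfl, hup (m := j + 2) le_rfl,
        hlow (m := j + 1) (by omega), hlow (m := j) (by omega)]
      nlinarith [mul_nonneg hc.le (tailRatio_nonneg hα hπ hrec hπ1 (j + 2)),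
        mul_nonneg hc.le (cdfRatio_nonneg hπ (j + 1)),
        mul_nonneg hc.le (sub_nonneg.2 (monotone_cdfRatio hα ha0 hmono hπ hrec j.le_succ))]
  · rw [show j + 1 + 2 = j + 2 + 1 by rfl, hlow (m := j + 2) (by omega),
      hlow (m := j + 1) (by omega), hlow (m := j) (by omega)]
    nlinarith [mul_nonneg hc.le (discreteConvex_cdfRatio hα ha0 hmono hconv hπ hrec j)]

end BirthDeath

def pbdRate (β : ℝ) (n : ℕ) : ℝ := β * n + n * (n - 1)

theorem pbdRate_zero (β : ℝ) : pbdRate β 0 = 0 := by simp [pbdRate]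

theorem monotone_pbdRate {β : ℝ} (hβ : 0 ≤ β) : Monotone (pbdRate β) :=
  monotone_nat_of_le_succ fun n => by
    simp only [pbdRate]
    push_cast
    nlinarith [(n.cast_nonneg : (0 : ℝ) ≤ n)]

theorem discreteConvex_pbdRate (β : ℝ) : DiscreteConvex (pbdRate β) := fun n => by
  simp only [pbdRate]
  push_cast
  ring_nf
  norm_num

/-- `pbdRate β n = n (n + β - 1)`; the gap in the inequality is `(n + 1) ^ 2 + (n + β) ^ 2 - 1`. -/
theorem pbdRate_mul_le_sq (β : ℝ) (n : ℕ) :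
    pbdRate β n * pbdRate β (n + 2) ≤ pbdRate β (n + 1) ^ 2 := by
  simp only [pbdRate]
  push_cast
  nlinarith [sq_nonneg ((n : ℝ) + β), (n.cast_nonneg : (0 : ℝ) ≤ n)]

theorem stmt_18_general
    (α β : ℝ) (hα : 0 < α) (hβ : 0 < β)
    (C : ℝ) (hC : 0 < C) (π : ℕ → ℝ)
    (hπ : ∀ n : ℕ, π n =
      C * α ^ n / ∏ i ∈ Finset.range n, (β * ((i : ℝ) + 1) + ((i : ℝ) + 1) * (i : ℝ)))
    (hπ1 : ∑' n, π n = 1)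
    (k : ℕ) (gk : ℕ → ℝ)
    (hgk : ∀ n : ℕ, α * gk (n + 1) - (β * (n : ℝ) + (n : ℝ) * ((n : ℝ) - 1)) * gk n
      = (if n = k then (1 : ℝ) else 0) - ∑' m : ℕ, (if m = k then (1 : ℝ) else 0) * π m)
    :
    ∀ i : ℕ, 1 ≤ i →
      ((k ≤ i - 1 ∨ k = i + 1) → 0 ≤ gk (i + 2) - 2 * gk (i + 1) + gk i) ∧
      (i + 2 ≤ k → gk (i + 2) - 2 * gk (i + 1) + gk i ≤ 0) := by
  have hfactor (i : ℕ) : β * ((i : ℝ) + 1) + ((i : ℝ) + 1) * (i : ℝ) = pbdRate β (i + 1) := by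
    simp only [pbdRate]
    push_cast
    ring
  have hrate (i : ℕ) : 0 < pbdRate β (i + 1) := by
    rw [← hfactor]
    positivity
  simp only [hfactor] at hπ
  have hprod (n : ℕ) : 0 < ∏ i ∈ range n, pbdRate β (i + 1) := prod_pos fun i _ => hrate i
  have hpos (n : ℕ) : 0 < π n := hπ n ▸ div_pos (mul_pos hC (pow_pos hα n)) (hprod n)
  have hrec (n : ℕ) : π (n + 1) * pbdRate β (n + 1) = α * π n := by
    rw [hπ, hπ, prod_range_succ]
    field_simp [(hprod n).ne', (hrate n).ne']
    ring
  have hsum : HasSum π 1 := by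
    by_cases hs : Summable π
    · exact hπ1 ▸ hs.hasSum
    · simp [tsum_eq_zero_of_not_summable hs] at hπ1
  have hmean : ∑' m : ℕ, (if m = k then (1 : ℝ) else 0) * π m = π k :=
    (tsum_eq_single k fun m hm => by simp [hm]).trans (by simp)
  exact BirthDeath.stein_indicator_secondDiff_sign hα (pbdRate_zero β) (monotone_pbdRate hβ.le)
    (discreteConvex_pbdRate β) (pbdRate_mul_le_sq β) hpos hrec hsum
    fun n => (hgk n).trans (by rw [hmean])

/-- sign of the second difference of the Stein solution `g_k` for the indicator of `{k}`. -/
theorem stmt_18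
    (α β : ℝ) (hα : 0 < α) (hβ : 0 < β)
    (C : ℝ) (hC : 0 < C) (π : ℕ → ℝ)
    (hπ : ∀ n : ℕ, π n =
      C * α ^ n / ∏ i ∈ Finset.range n, (β * ((i : ℝ) + 1) + ((i : ℝ) + 1) * (i : ℝ)))
    (hπ1 : ∑' n, π n = 1)
    (k : ℕ) (gk : ℕ → ℝ) (hgk0 : gk 0 = gk 1)
    (hgk : ∀ n : ℕ, α * gk (n + 1) - (β * (n : ℝ) + (n : ℝ) * ((n : ℝ) - 1)) * gk n
      = (if n = k then (1 : ℝ) else 0) - ∑' m : ℕ, (if m = k then (1 : ℝ) else 0) * π m)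
    :
    ∀ i : ℕ, 1 ≤ i →
      ((k ≤ i - 1 ∨ k = i + 1) → 0 ≤ gk (i + 2) - 2 * gk (i + 1) + gk i) ∧
      (i + 2 ≤ k → gk (i + 2) - 2 * gk (i + 1) + gk i ≤ 0) :=
  stmt_18_general α β hα hβ C hC π hπ hπ1 k gk hgk
end
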